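/- arXiv:2508.04978 — 6 statements merged into one kernel-verified Lean document; each statement's English description precedes it below -/
import Mathlib

section
/- Let H be a low pass filter, let p ≥ 1 and n ≥ 1 be integers. Then the Riemann-sum error estimate | Σ_{k=-n}^{n} H(k/n)^p − n ∫_{-1}^{1} H(x)^p dx | ≤ (p/4) · ‖H''‖₁ / n holds, where ‖H''‖₁ = ∫_{-1}^{1} |H''(t)| dt. -/
/-- A low pass filter: an infinitely differentiable function `H : ℝ → [0,1]` with
`H t = H (-t)`, `H t = 1` for `|t| ≤ 1/2` and `H t = 0` for `|t| ≥ 1`. -/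
def IsLowPassFilter (H : ℝ → ℝ) : Prop :=
  ContDiff ℝ (⊤ : ℕ∞) H ∧ (∀ t, H t ∈ Set.Icc (0:ℝ) 1) ∧ (∀ t, H t = H (-t)) ∧
    (∀ t, |t| ≤ 1/2 → H t = 1) ∧ (∀ t, 1 ≤ |t| → H t = 0)

open intervalIntegral in
lemma trap_id (f : ℝ → ℝ) (hf : ContDiff ℝ (⊤ : ℕ∞) f) (a b : ℝ) :
    (b - a) * (f a + f b) / 2 - ∫ x in a..b, f x
      = ∫ x in a..b, ((x - a) * (b - x) / 2) * deriv (deriv f) x := by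
  have hf' : ContDiff ℝ (⊤:ℕ∞) f := hf.of_le (by simp)
  have hdf : Differentiable ℝ f := hf'.differentiable (by simp)
  have hdf' : Differentiable ℝ (deriv f) :=
    (contDiff_infty_iff_deriv.mp hf').2.differentiable (by simp)
  have hcf : Continuous f := hf.continuous
  have hcf' : Continuous (deriv f) := hf'.continuous_deriv (by exact_mod_cast le_top)
  have hcf'' : Continuous (deriv (deriv f)) :=
    (contDiff_infty_iff_deriv.mp hf').2.continuous_deriv (by exact_mod_cast le_top)
  set F : ℝ → ℝ := fun x => ((x - a) * (b - x) / 2) * deriv f x - ((a + b - 2*x)/2) * f x with hF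
  have hder : ∀ x, HasDerivAt F (((x - a) * (b - x) / 2) * deriv (deriv f) x + f x) x := by
    intro x
    have h1 : HasDerivAt (fun x => ((x - a) * (b - x) / 2)) ((a + b - 2*x)/2) x := by
      have h := ((((hasDerivAt_id x).sub_const a).mul
        ((hasDerivAt_const x b).sub (hasDerivAt_id x))).div_const 2)
      simp only [id_eq] at h
      exact h.congr_deriv (by simp only [Pi.sub_apply, Pi.mul_apply, id_eq]; ring)
    have h2 : HasDerivAt (fun x => ((a + b - 2*x)/2)) (-1) x := by
      have h := (((hasDerivAt_const x (a+b)).sub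
        ((hasDerivAt_const x (2:ℝ)).mul (hasDerivAt_id x))).div_const 2)
      simp only [id_eq] at h
      exact h.congr_deriv (by ring)
    have hx1 : HasDerivAt f (deriv f x) x := (hdf x).hasDerivAt
    have hx2 : HasDerivAt (deriv f) (deriv (deriv f) x) x := (hdf' x).hasDerivAt
    have := (h1.mul hx2).sub (h2.mul hx1)
    exact this.congr_deriv (by ring)
  have key : ∫ x in a..b, (((x - a) * (b - x) / 2) * deriv (deriv f) x + f x)
      = F b - F a := by
    refine integral_eq_sub_of_hasDerivAt (fun x _ => hder x) ?_
    exact (Continuous.add (by fun_prop) hcf).intervalIntegrable _ _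
  have hsplit : ∫ x in a..b, (((x - a) * (b - x) / 2) * deriv (deriv f) x + f x)
      = (∫ x in a..b, ((x - a) * (b - x) / 2) * deriv (deriv f) x) + ∫ x in a..b, f x := by
    refine integral_add ?_ (hcf.intervalIntegrable _ _)
    exact (Continuous.intervalIntegrable (by fun_prop) _ _)
  rw [hsplit] at key
  have : F b - F a = (b - a) * (f a + f b) / 2 := by simp only [hF]; ring
  linarith [key]

set_option maxHeartbeats 1000000 in
open intervalIntegral in
lemma trap_bound (f : ℝ → ℝ) (hf : ContDiff ℝ (⊤ : ℕ∞) f) (a b : ℝ) (hab : a ≤ b) :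
    |(b - a) * (f a + f b) / 2 - ∫ x in a..b, f x|
      ≤ ((b - a)^2 / 8) * ∫ x in a..b, |deriv (deriv f) x| := by
  have hf' : ContDiff ℝ (⊤:ℕ∞) f := hf.of_le (by simp)
  have hcf'' : Continuous (deriv (deriv f)) :=
    (contDiff_infty_iff_deriv.mp hf').2.continuous_deriv (by exact_mod_cast le_top)
  rw [trap_id f hf a b]
  calc |∫ x in a..b, ((x - a) * (b - x) / 2) * deriv (deriv f) x|
      ≤ ∫ x in a..b, |((x - a) * (b - x) / 2) * deriv (deriv f) x| :=
        intervalIntegral.abs_integral_le_integral_abs hab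
    _ ≤ ∫ x in a..b, ((b - a)^2 / 8) * |deriv (deriv f) x| := by
        apply intervalIntegral.integral_mono_on hab
        · exact (Continuous.intervalIntegrable (by fun_prop) _ _)
        · exact (Continuous.intervalIntegrable (by fun_prop) _ _)
        intro x hx
        rw [abs_mul]
        apply mul_le_mul_of_nonneg_right _ (abs_nonneg _)
        rw [abs_of_nonneg (by nlinarith [hx.1, hx.2] : (0:ℝ) ≤ (x - a) * (b - x) / 2)]
        nlinarith [hx.1, hx.2, sq_nonneg (a + b - 2*x)]
    _ = ((b - a)^2 / 8) * ∫ x in a..b, |deriv (deriv f) x| := by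
        rw [intervalIntegral.integral_const_mul]

set_option maxHeartbeats 2000000 in
/-- For a low pass filter `H` and integers `p ≥ 1`, `n ≥ 1`,
`| Σ_{k=-n}^n H(k/n)^p − n ∫_{-1}^1 H(x)^p dx | ≤ (p/4)‖H''‖₁/n`. -/
theorem riemann_sum_error (H : ℝ → ℝ) (hH : IsLowPassFilter H) (p n : ℕ)
    (hp : 1 ≤ p) (hn : 1 ≤ n) :
    |(∑ k ∈ Finset.Icc (-(n:ℤ)) (n:ℤ), H ((k : ℝ) / n) ^ p) -
        n * ∫ x in (-1:ℝ)..1, H x ^ p|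
      ≤ (p / 4 : ℝ) * (∫ t in (-1:ℝ)..1, |iteratedDeriv 2 H t|) / n := by
  obtain ⟨hsm, hrange, hsymm, hone, hzero⟩ := hH
  have hnpos : (0:ℝ) < n := by exact_mod_cast hn
  have hne : (n:ℝ) ≠ 0 := ne_of_gt hnpos
  have hsm' : ContDiff ℝ (⊤:ℕ∞) H := hsm.of_le (by simp)
  have hH0 : Differentiable ℝ H := hsm'.differentiable (by simp)
  have hH1d : Differentiable ℝ (deriv H) :=
    (contDiff_infty_iff_deriv.mp hsm').2.differentiable (by simp)
  have hHc : Continuous H := hsm.continuous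
  have hH1c : Continuous (deriv H) := hsm'.continuous_deriv (by exact_mod_cast le_top)
  have hH2c : Continuous (deriv (deriv H)) :=
    (contDiff_infty_iff_deriv.mp hsm').2.continuous_deriv (by exact_mod_cast le_top)
  have hHpos : ∀ x, 0 ≤ H x := fun x => (hrange x).1
  have hHle : ∀ x, H x ≤ 1 := fun x => (hrange x).2
  have hHm1 : H (-1) = 0 := hzero _ (by norm_num)
  have hHp1 : H 1 = 0 := hzero _ (by norm_num)
  set G : ℝ → ℝ := fun x => H x ^ p with hGdef
  have hGsm : ContDiff ℝ (⊤ : ℕ∞) G := hsm.pow p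
  have hGc : Continuous G := hGsm.continuous
  -- derivative formulas
  have hG'fun : deriv G = fun x => (p:ℝ) * H x ^ (p-1) * deriv H x := by
    funext x
    rw [hGdef]
    exact (((hH0 x).hasDerivAt).pow p).deriv
  set E : ℝ → ℝ := fun x =>
    (p:ℝ) * (((p-1:ℕ):ℝ) * H x ^ (p-2) * deriv H x * deriv H x
      + H x ^ (p-1) * deriv (deriv H) x) with hEdef
  have hEc : Continuous E := by
    simp only [hEdef]; fun_prop
  have hG''x : ∀ x, HasDerivAt (deriv G) (E x) x := by
    intro x
    rw [hG'fun]; simp only [hEdef]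
    have h1 : HasDerivAt (fun x => H x ^ (p-1))
        (((p-1:ℕ):ℝ) * H x ^ (p-1-1) * deriv H x) x := ((hH0 x).hasDerivAt).pow (p-1)
    rw [show p - 1 - 1 = p - 2 from by omega] at h1
    have h2 : HasDerivAt (deriv H) (deriv (deriv H) x) x := (hH1d x).hasDerivAt
    have key := (h1.mul h2).const_mul (p:ℝ)
    convert key using 1
    all_goals first
    | (funext y; show _ = (p:ℝ) * (H y ^ (p-1) * deriv H y); ring)
    | (funext y; ring)
    | ring
    | rfl
  have hddE : deriv (deriv G) = E := funext fun x => (hG''x x).deriv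
  have hddc : Continuous (deriv (deriv G)) := hddE ▸ hEc
  -- partition points
  set a : ℕ → ℝ := fun k => -1 + k / n with ha
  have ha0 : a 0 = -1 := by simp [ha]
  have ha2n : a (2*n) = 1 := by
    simp only [ha]
    first
    | (push_cast; field_simp; ring)
    | (push_cast; field_simp)
    | (push_cast; field_simp; norm_num)
  have hstep : ∀ k:ℕ, a (k+1) - a k = 1/n := by
    intro k; simp only [ha]
    first
    | (push_cast; field_simp; ring)
    | (push_cast; field_simp)
  have hmono : ∀ k:ℕ, a k ≤ a (k+1) := by
    intro k
    rw [← sub_nonneg, hstep k]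
    positivity
  -- reindex the sum
  have hsum1 : (∑ k ∈ Finset.Icc (-(n:ℤ)) (n:ℤ), H ((k:ℝ)/n) ^ p)
      = ∑ j ∈ Finset.range (2*n+1), G (a j) := by
    have hmap : Finset.Icc (-(n:ℤ)) (n:ℤ)
        = Finset.map ⟨fun j : ℕ => (j:ℤ) - n, fun x y h => by simp only at h; omega⟩
            (Finset.range (2*n+1)) := by
      ext k
      simp only [Finset.mem_map, Finset.mem_range, Finset.mem_Icc, Function.Embedding.coeFn_mk, DFunLike.coe]
      constructor
      · intro hk
        exact ⟨(k + n).toNat, by omega, by omega⟩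
      · rintro ⟨j, hj, rfl⟩
        omega
    rw [hmap, Finset.sum_map]
    apply Finset.sum_congr rfl
    intro j hj
    simp only [Function.Embedding.coeFn_mk, DFunLike.coe, hGdef, ha]
    congr 1
    push_cast
    field_simp
    ring
  -- adjacent interval sums
  have hints : ∑ k ∈ Finset.range (2*n), ∫ x in a k..a (k+1), G x
      = ∫ x in (-1:ℝ)..1, G x := by
    rw [← ha0, ← ha2n]
    exact intervalIntegral.sum_integral_adjacent_intervals
      (fun k _ => hGc.intervalIntegrable _ _)
  have habs : ∑ k ∈ Finset.range (2*n), ∫ x in a k..a (k+1), |deriv (deriv G) x|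
      = ∫ x in (-1:ℝ)..1, |deriv (deriv G) x| := by
    rw [← ha0, ← ha2n]
    exact intervalIntegral.sum_integral_adjacent_intervals
      (fun k _ => (hddc.abs).intervalIntegrable _ _)
  -- endpoint values vanish
  have hz1 : G (a (2*n)) = 0 := by
    rw [ha2n]; show H 1 ^ p = 0; rw [hHp1]; exact zero_pow (by omega)
  have hz2 : G (a 0) = 0 := by
    rw [ha0]; show H (-1) ^ p = 0; rw [hHm1]; exact zero_pow (by omega)
  have hgsum : ∑ k ∈ Finset.range (2*n), (G (a k) + G (a (k+1)))
      = 2 * ∑ j ∈ Finset.range (2*n+1), G (a j) := by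
    rw [Finset.sum_add_distrib]
    have e1 : ∑ k ∈ Finset.range (2*n), G (a k)
        = (∑ j ∈ Finset.range (2*n+1), G (a j)) - G (a (2*n)) := by
      rw [Finset.sum_range_succ]; ring
    have e2 : ∑ k ∈ Finset.range (2*n), G (a (k+1))
        = (∑ j ∈ Finset.range (2*n+1), G (a j)) - G (a 0) := by
      rw [Finset.sum_range_succ']; ring
    rw [e1, e2, hz1, hz2]; ring
  -- trapezoid sum identity
  have hX : ∑ k ∈ Finset.range (2*n), (a (k+1) - a k) * (G (a k) + G (a (k+1))) / 2
      = (1/(n:ℝ)) * ∑ j ∈ Finset.range (2*n+1), G (a j) := by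
    have hc : ∀ k ∈ Finset.range (2*n),
        (a (k+1) - a k) * (G (a k) + G (a (k+1))) / 2
          = (1/(n:ℝ)) * ((G (a k) + G (a (k+1))) / 2) := by
      intro k _; rw [hstep k]; ring
    rw [Finset.sum_congr rfl hc, ← Finset.mul_sum, ← Finset.sum_div, hgsum]
    ring
  have hTsum : (∑ j ∈ Finset.range (2*n+1), G (a j)) - n * ∫ x in (-1:ℝ)..1, G x
      = n * ∑ k ∈ Finset.range (2*n),
          ((a (k+1) - a k) * (G (a k) + G (a (k+1))) / 2 - ∫ x in a k..a (k+1), G x) := by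
    rw [Finset.sum_sub_distrib, hints, hX]
    first
    | (field_simp; ring)
    | field_simp
  -- the main estimate
  have hkey : |(∑ j ∈ Finset.range (2*n+1), G (a j)) - n * ∫ x in (-1:ℝ)..1, G x|
      ≤ (1/(8*n)) * ∫ x in (-1:ℝ)..1, |deriv (deriv G) x| := by
    rw [hTsum, abs_mul, abs_of_nonneg (le_of_lt hnpos)]
    have hb1 : |∑ k ∈ Finset.range (2*n),
        ((a (k+1) - a k) * (G (a k) + G (a (k+1))) / 2 - ∫ x in a k..a (k+1), G x)|
        ≤ ∑ k ∈ Finset.range (2*n),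
            |(a (k+1) - a k) * (G (a k) + G (a (k+1))) / 2 - ∫ x in a k..a (k+1), G x| :=
      Finset.abs_sum_le_sum_abs _ _
    have hb2 : ∑ k ∈ Finset.range (2*n),
        |(a (k+1) - a k) * (G (a k) + G (a (k+1))) / 2 - ∫ x in a k..a (k+1), G x|
        ≤ ∑ k ∈ Finset.range (2*n),
            (1/(8*(n:ℝ)^2)) * ∫ x in a k..a (k+1), |deriv (deriv G) x| := by
      apply Finset.sum_le_sum
      intro k _
      have h := trap_bound G hGsm (a k) (a (k+1)) (hmono k)
      rw [hstep k] at h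
      calc |(a (k+1) - a k) * (G (a k) + G (a (k+1))) / 2 - ∫ x in a k..a (k+1), G x|
          = |(1/(n:ℝ)) * (G (a k) + G (a (k+1))) / 2 - ∫ x in a k..a (k+1), G x| := by
            rw [hstep k]
        _ ≤ ((1/(n:ℝ))^2/8) * ∫ x in a k..a (k+1), |deriv (deriv G) x| := h
        _ = (1/(8*(n:ℝ)^2)) * ∫ x in a k..a (k+1), |deriv (deriv G) x| := by
            congr 1; field_simp
    have hb3 : ∑ k ∈ Finset.range (2*n),
        (1/(8*(n:ℝ)^2)) * ∫ x in a k..a (k+1), |deriv (deriv G) x|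
        = (1/(8*(n:ℝ)^2)) * ∫ x in (-1:ℝ)..1, |deriv (deriv G) x| := by
      rw [← Finset.mul_sum, habs]
    have h4 := le_trans hb1 (hb2.trans_eq hb3)
    calc (n:ℝ) * |∑ k ∈ Finset.range (2*n),
          ((a (k+1) - a k) * (G (a k) + G (a (k+1))) / 2 - ∫ x in a k..a (k+1), G x)|
        ≤ (n:ℝ) * ((1/(8*(n:ℝ)^2)) * ∫ x in (-1:ℝ)..1, |deriv (deriv G) x|) :=
          mul_le_mul_of_nonneg_left h4 (le_of_lt hnpos)
      _ = (1/(8*n)) * ∫ x in (-1:ℝ)..1, |deriv (deriv G) x| := by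
          field_simp
  -- bound ∫|G''| by 2p∫|H''|
  have hH2nonneg : (0:ℝ) ≤ ∫ x in (-1:ℝ)..1, |deriv (deriv H) x| :=
    intervalIntegral.integral_nonneg (by norm_num) (fun x _ => abs_nonneg _)
  have hbd : (∫ x in (-1:ℝ)..1, |deriv (deriv G) x|)
      ≤ 2 * p * ∫ x in (-1:ℝ)..1, |deriv (deriv H) x| := by
    rw [hddE]
    rcases eq_or_lt_of_le hp with hp1 | hp2
    · -- p = 1
      have hE1 : ∀ x, E x = deriv (deriv H) x := by
        intro x; simp only [hEdef, ← hp1]; norm_num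
      simp only [hE1, ← hp1]
      norm_num
      linarith [hH2nonneg]
    · -- p ≥ 2
      have hp2' : 2 ≤ p := hp2
      have hGd1 : deriv G 1 = 0 := by
        rw [hG'fun]; simp only; rw [hHp1, zero_pow (show p-1 ≠ 0 by omega)]; ring
      have hGdm1 : deriv G (-1) = 0 := by
        rw [hG'fun]; simp only; rw [hHm1, zero_pow (show p-1 ≠ 0 by omega)]; ring
      have hIBP : (∫ x in (-1:ℝ)..1, E x) = 0 := by
        rw [intervalIntegral.integral_eq_sub_of_hasDerivAt
          (fun x _ => hG''x x) (hEc.intervalIntegrable _ _), hGd1, hGdm1, sub_zero]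
      have hint1 : IntervalIntegrable
          (fun x => (p:ℝ) * (((p-1:ℕ):ℝ) * H x ^ (p-2) * deriv H x * deriv H x))
          MeasureTheory.volume (-1:ℝ) 1 := by
        apply Continuous.intervalIntegrable; fun_prop
      have hint2 : IntervalIntegrable
          (fun x => (p:ℝ) * (H x ^ (p-1) * deriv (deriv H) x))
          MeasureTheory.volume (-1:ℝ) 1 := by
        apply Continuous.intervalIntegrable; fun_prop
      have hsplitE : (∫ x in (-1:ℝ)..1, E x)
          = (∫ x in (-1:ℝ)..1, (p:ℝ) * (((p-1:ℕ):ℝ) * H x ^ (p-2) * deriv H x * deriv H x))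
            + ∫ x in (-1:ℝ)..1, (p:ℝ) * (H x ^ (p-1) * deriv (deriv H) x) := by
        rw [← intervalIntegral.integral_add hint1 hint2]
        apply intervalIntegral.integral_congr
        intro x _
        simp only [hEdef]; ring
      have hI1 : (∫ x in (-1:ℝ)..1, (p:ℝ) * (((p-1:ℕ):ℝ) * H x ^ (p-2) * deriv H x * deriv H x))
          ≤ (p:ℝ) * ∫ x in (-1:ℝ)..1, |deriv (deriv H) x| := by
        have hI1eq : (∫ x in (-1:ℝ)..1, (p:ℝ) * (((p-1:ℕ):ℝ) * H x ^ (p-2) * deriv H x * deriv H x))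
            = - ∫ x in (-1:ℝ)..1, (p:ℝ) * (H x ^ (p-1) * deriv (deriv H) x) := by
          rw [hIBP] at hsplitE; linarith
        rw [hI1eq, ← intervalIntegral.integral_neg]
        rw [← intervalIntegral.integral_const_mul]
        apply intervalIntegral.integral_mono_on (by norm_num)
        · exact hint2.neg
        · exact Continuous.intervalIntegrable (by fun_prop) _ _
        intro x _
        have h0 : 0 ≤ H x := hHpos x
        have h1le : H x ^ (p-1) ≤ 1 := pow_le_one₀ h0 (hHle x)
        have h1nn : 0 ≤ H x ^ (p-1) := pow_nonneg h0 _
        have hpge : (0:ℝ) ≤ p := by positivity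
        have key : -(H x ^ (p-1) * deriv (deriv H) x) ≤ |deriv (deriv H) x| := by
          nlinarith [mul_le_mul_of_nonneg_left (neg_le_abs (deriv (deriv H) x)) h1nn,
            mul_le_mul_of_nonneg_right h1le (abs_nonneg (deriv (deriv H) x))]
        nlinarith [mul_le_mul_of_nonneg_left key hpge]
      -- pointwise bound on |E|
      have hpw : ∀ x ∈ Set.Icc (-1:ℝ) 1, |E x|
          ≤ (p:ℝ) * (((p-1:ℕ):ℝ) * H x ^ (p-2) * deriv H x * deriv H x)
            + (p:ℝ) * |deriv (deriv H) x| := by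
        intro x _
        have h0 : 0 ≤ H x := hHpos x
        have h1le : H x ^ (p-1) ≤ 1 := pow_le_one₀ h0 (hHle x)
        have h1nn : 0 ≤ H x ^ (p-1) := pow_nonneg h0 _
        have h2nn : 0 ≤ ((p-1:ℕ):ℝ) * H x ^ (p-2) * deriv H x * deriv H x := by
          have := mul_nonneg (mul_nonneg (Nat.cast_nonneg (p-1) : (0:ℝ) ≤ ((p-1:ℕ):ℝ))
            (pow_nonneg h0 (p-2))) (mul_self_nonneg (deriv H x))
          nlinarith [this]
        have hd : |H x ^ (p-1) * deriv (deriv H) x| ≤ |deriv (deriv H) x| := by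
          rw [abs_mul, abs_of_nonneg h1nn]
          nlinarith [mul_le_mul_of_nonneg_right h1le (abs_nonneg (deriv (deriv H) x))]
        calc |E x| = |(p:ℝ)| * |((p-1:ℕ):ℝ) * H x ^ (p-2) * deriv H x * deriv H x
              + H x ^ (p-1) * deriv (deriv H) x| := by simp only [hEdef]; rw [← abs_mul]
          _ ≤ |(p:ℝ)| * (|((p-1:ℕ):ℝ) * H x ^ (p-2) * deriv H x * deriv H x|
              + |H x ^ (p-1) * deriv (deriv H) x|) := by
              apply mul_le_mul_of_nonneg_left (abs_add_le _ _) (abs_nonneg _)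
          _ ≤ (p:ℝ) * (((p-1:ℕ):ℝ) * H x ^ (p-2) * deriv H x * deriv H x
              + |deriv (deriv H) x|) := by
              rw [abs_of_nonneg (by positivity : (0:ℝ) ≤ (p:ℝ)),
                abs_of_nonneg h2nn]
              apply mul_le_mul_of_nonneg_left _ (by positivity : (0:ℝ) ≤ (p:ℝ))
              linarith [hd]
          _ = (p:ℝ) * (((p-1:ℕ):ℝ) * H x ^ (p-2) * deriv H x * deriv H x)
              + (p:ℝ) * |deriv (deriv H) x| := by ring
      calc (∫ x in (-1:ℝ)..1, |E x|)
          ≤ ∫ x in (-1:ℝ)..1, ((p:ℝ) * (((p-1:ℕ):ℝ) * H x ^ (p-2) * deriv H x * deriv H x)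
              + (p:ℝ) * |deriv (deriv H) x|) := by
            apply intervalIntegral.integral_mono_on (by norm_num)
            · exact Continuous.intervalIntegrable (hEc.abs) _ _
            · exact Continuous.intervalIntegrable (by fun_prop) _ _
            exact hpw
        _ = (∫ x in (-1:ℝ)..1, (p:ℝ) * (((p-1:ℕ):ℝ) * H x ^ (p-2) * deriv H x * deriv H x))
            + ∫ x in (-1:ℝ)..1, (p:ℝ) * |deriv (deriv H) x| := by
            apply intervalIntegral.integral_add hint1
            exact Continuous.intervalIntegrable (by fun_prop) _ _
        _ ≤ (p:ℝ) * (∫ x in (-1:ℝ)..1, |deriv (deriv H) x|)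
            + (p:ℝ) * ∫ x in (-1:ℝ)..1, |deriv (deriv H) x| := by
            exact add_le_add hI1 (le_of_eq (intervalIntegral.integral_const_mul _ _))
        _ = 2 * p * ∫ x in (-1:ℝ)..1, |deriv (deriv H) x| := by ring
  -- conclude
  have hiter : iteratedDeriv 2 H = deriv (deriv H) := by
    rw [show (2:ℕ) = 1 + 1 from rfl, iteratedDeriv_succ, iteratedDeriv_one]
  rw [hiter, hsum1]
  calc |(∑ j ∈ Finset.range (2*n+1), G (a j)) - n * ∫ x in (-1:ℝ)..1, G x|
      ≤ (1/(8*n)) * ∫ x in (-1:ℝ)..1, |deriv (deriv G) x| := hkey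
    _ ≤ (1/(8*n)) * (2 * p * ∫ x in (-1:ℝ)..1, |deriv (deriv H) x|) := by
        apply mul_le_mul_of_nonneg_left hbd (by positivity)
    _ = (p / 4 : ℝ) * (∫ t in (-1:ℝ)..1, |deriv (deriv H) t|) / n := by
        field_simp
        ring
end

section
/- Let H be a low pass filter, p ≥ 1 an integer, and n an integer with n ≥ √(p‖H''‖₁ / ‖H^p‖₁), where ‖H^p‖₁ = ∫_{-1}^{1} H(x)^p dx. Then | Σ_{k=-n}^{n} H(k/n)^p − n ∫_{-1}^{1} H(x)^p dx | ≤ (n/4) ∫_{-1}^{1} H(x)^p dx. -/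
open intervalIntegral MeasureTheory Finset ContDiff

/-- Trapezoid rule with exact kernel remainder on one cell. -/
lemma trap_cell (f f' f'' : ℝ → ℝ) (hf : ∀ x, HasDerivAt f (f' x) x)
    (hf' : ∀ x, HasDerivAt f' (f'' x) x) (hcf : Continuous f) (hcf' : Continuous f')
    (hcf'' : Continuous f'') (a b : ℝ) :
    ∫ x in a..b, f x = (b - a) * (f a + f b) / 2
      - ∫ x in a..b, (x - a) * (b - x) / 2 * f'' x := by
  have hφ : ∀ x : ℝ, HasDerivAt (fun y => (y - a) * (b - y) / 2) ((a + b) / 2 - x) x := by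
    intro x
    have h1 : HasDerivAt (fun y : ℝ => (y - a) * (b - y)) (1 * (b - x) + (x - a) * (0 - 1)) x :=
      ((hasDerivAt_id x).sub_const a).mul ((hasDerivAt_const x b).sub (hasDerivAt_id x))
    have h2 := h1.div_const 2
    exact h2.congr_deriv (by ring)
  have hφ' : ∀ x : ℝ, HasDerivAt (fun y : ℝ => (a + b) / 2 - y) (-1 : ℝ) x := by
    intro x
    exact ((hasDerivAt_const x ((a + b) / 2)).sub (hasDerivAt_id' x)).congr_deriv (by ring)
  have hIBP1 := integral_mul_deriv_eq_deriv_mul (a := a) (b := b)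
    (u := fun y => (y - a) * (b - y) / 2) (u' := fun y => (a + b) / 2 - y)
    (v := f') (v' := f'') (fun x _ => hφ x) (fun x _ => hf' x)
    ((continuous_const.sub continuous_id).intervalIntegrable a b)
    (hcf''.intervalIntegrable a b)
  have hIBP2 := integral_mul_deriv_eq_deriv_mul (a := a) (b := b)
    (u := fun y : ℝ => (a + b) / 2 - y) (u' := fun _ => (-1 : ℝ))
    (v := f) (v' := f') (fun x _ => hφ' x) (fun x _ => hf x)
    (continuous_const.intervalIntegrable a b)
    (hcf'.intervalIntegrable a b)
  have hneg : ∫ x in a..b, (-1 : ℝ) * f x = -∫ x in a..b, f x := by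
    simp [neg_one_mul, intervalIntegral.integral_neg]
  rw [hneg] at hIBP2
  rw [hIBP1, hIBP2]
  ring

lemma kernel_bound (nR u v : ℝ) (hu : 0 ≤ u) (hv : 0 ≤ v) (hs : nR * (u + v) = 1) :
    u * v / 2 ≤ 1 / (8 * nR ^ 2) := by
  have hn2 : 0 < nR ^ 2 := by
    rcases eq_or_ne nR 0 with h | h
    · rw [h] at hs; simp at hs
    · positivity
  rw [div_le_div_iff₀ (by norm_num) (by positivity)]
  nlinarith [sq_nonneg (nR * (u - v)), sq_nonneg (nR * (u + v)), mul_nonneg hu hv]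


/-- if `n ≥ √(p‖H''‖₁/‖H^p‖₁)` then the Riemann sum of `H(·)^p` over
`k/n`, `-n ≤ k ≤ n`, differs from `n ∫_{-1}^1 H^p` by at most `(n/4)∫_{-1}^1 H^p`. -/
theorem riemann_sum_error_asymp (H : ℝ → ℝ) (hH : IsLowPassFilter H) (p : ℕ) (hp : 1 ≤ p)
    (n : ℕ)
    (hn : Real.sqrt ((p * ∫ t in (-1:ℝ)..1, |iteratedDeriv 2 H t|) /
        (∫ x in (-1:ℝ)..1, H x ^ p)) ≤ n) :
    |(∑ k ∈ Finset.Icc (-(n:ℤ)) (n:ℤ), H ((k : ℝ) / n) ^ p) -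
        n * ∫ x in (-1:ℝ)..1, H x ^ p|
      ≤ (n / 4 : ℝ) * ∫ x in (-1:ℝ)..1, H x ^ p := by
  obtain ⟨hsm, hrange, -, hone, hzero⟩ := hH
  have hs : ContDiff ℝ (∞ : WithTop ℕ∞) H := hsm.of_le (by simp)
  set dH := deriv H with hdH_def
  set d2H := deriv dH with hd2H_def
  have hs1 : ContDiff ℝ (∞ : WithTop ℕ∞) dH := by
    simpa using hs.iterate_deriv 1
  have hs2 : ContDiff ℝ (∞ : WithTop ℕ∞) d2H := by
    simpa using hs1.iterate_deriv 1
  have cH : Continuous H := hs.continuous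
  have cdH : Continuous dH := hs1.continuous
  have cd2H : Continuous d2H := hs2.continuous
  have hHd : ∀ x, HasDerivAt H (dH x) x := fun x => (hs.differentiable (by simp) x).hasDerivAt
  have hdHd : ∀ x, HasDerivAt dH (d2H x) x := fun x => (hs1.differentiable (by simp) x).hasDerivAt
  have h2H : iteratedDeriv 2 H = d2H := by
    rw [show (2:ℕ) = 1 + 1 from rfl, iteratedDeriv_succ, iteratedDeriv_one]
  rw [h2H] at hn
  set A : ℝ := ∫ t in (-1:ℝ)..1, |d2H t| with hA_def
  set I : ℝ := ∫ x in (-1:ℝ)..1, H x ^ p with hI_def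
  set f : ℝ → ℝ := fun x => H x ^ p with hf_def
  set F1 : ℝ → ℝ := fun x => ↑p * H x ^ (p - 1) * dH x with hF1_def
  set F2 : ℝ → ℝ := fun x =>
    ↑p * (↑(p - 1) * H x ^ (p - 1 - 1) * dH x) * dH x + ↑p * H x ^ (p - 1) * d2H x with hF2_def
  have hfd : ∀ x, HasDerivAt f (F1 x) x := fun x => (hHd x).pow p
  have hF1d : ∀ x, HasDerivAt F1 (F2 x) x := fun x =>
    (((hHd x).pow (p - 1)).const_mul (p : ℝ)).mul (hdHd x)
  have cf : Continuous f := cH.pow p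
  have cF1 : Continuous F1 := (continuous_const.mul (cH.pow _)).mul cdH
  have cF2 : Continuous F2 :=
    ((continuous_const.mul ((continuous_const.mul (cH.pow _)).mul cdH)).mul cdH).add
      ((continuous_const.mul (cH.pow _)).mul cd2H)
  -- basic sign facts
  have hH0 : ∀ x, 0 ≤ H x := fun x => (hrange x).1
  have hH1 : ∀ x, H x ≤ 1 := fun x => (hrange x).2
  -- ============ numeric facts ============
  have hintf : ∀ u v : ℝ, IntervalIntegrable f volume u v := fun u v =>
    cf.intervalIntegrable u v
  have hmid : ∫ x in (-(1/2):ℝ)..(1/2:ℝ), f x = 1 := by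
    rw [intervalIntegral.integral_congr (g := fun _ => (1:ℝ))]
    · simp
      norm_num
    · intro x hx
      rw [Set.uIcc_of_le (by norm_num : (-(1/2):ℝ) ≤ 1/2)] at hx
      have hx' : |x| ≤ 1/2 := abs_le.mpr ⟨by linarith [hx.1], hx.2⟩
      simp only [hf_def]
      rw [hone x hx']
      simp
  have hI1 : 1 ≤ I := by
    have e1 := intervalIntegral.integral_add_adjacent_intervals (μ := volume)
      (hintf (-(1/2)) (1/2)) (hintf (1/2) 1)
    have e2 := intervalIntegral.integral_add_adjacent_intervals (μ := volume)
      (hintf (-1) (-(1/2))) ((hintf (-(1/2)) (1/2)).trans (hintf (1/2) 1))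
    have n1 : 0 ≤ ∫ x in (-1:ℝ)..(-(1/2):ℝ), f x :=
      intervalIntegral.integral_nonneg (by norm_num)
        (fun u _ => pow_nonneg (hH0 u) p)
    have n2 : 0 ≤ ∫ x in (1/2:ℝ)..(1:ℝ), f x :=
      intervalIntegral.integral_nonneg (by norm_num)
        (fun u _ => pow_nonneg (hH0 u) p)
    have hIdef' : I = ∫ x in (-1:ℝ)..1, f x := hI_def
    rw [hIdef']
    rw [← e2, ← e1]
    linarith
  have hI2 : I ≤ 2 := by
    have h := intervalIntegral.integral_mono_on (a := (-1:ℝ)) (b := (1:ℝ)) (μ := volume)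
      (f := f) (g := fun _ => (1:ℝ)) (by norm_num) (hintf _ _)
      (continuous_const.intervalIntegrable _ _)
      (fun x _ => pow_le_one₀ (hH0 x) (hH1 x))
    rw [intervalIntegral.integral_const, smul_eq_mul] at h
    have hIdef' : I = ∫ x in (-1:ℝ)..1, f x := hI_def
    rw [hIdef']
    linarith
  have hdHhalf : dH (1/2) = 0 := by
    have hmax : IsLocalMax H (1/2 : ℝ) := Filter.Eventually.of_forall (fun t => by
      rw [hone (1/2) (by rw [abs_of_nonneg (by norm_num : (0:ℝ) ≤ 1/2)])]
      exact hH1 t)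
    exact hmax.deriv_eq_zero
  have hdHone : dH 1 = 0 := by
    have hmin : IsLocalMin H (1 : ℝ) := Filter.Eventually.of_forall (fun t => by
      rw [hzero 1 (by norm_num)]
      exact hH0 t)
    exact hmin.deriv_eq_zero
  have hdHmone : dH (-1) = 0 := by
    have hmin : IsLocalMin H (-1 : ℝ) := Filter.Eventually.of_forall (fun t => by
      rw [hzero (-1) (by norm_num)]
      exact hH0 t)
    exact hmin.deriv_eq_zero
  have hA2 : 2 ≤ A := by
    have hdHval : ∀ t ∈ Set.Icc (1/2:ℝ) 1, |dH t| ≤ ∫ s in (1/2:ℝ)..1, |d2H s| := by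
      intro t ht
      have hftc : ∫ s in (1/2:ℝ)..t, d2H s = dH t - dH (1/2) :=
        intervalIntegral.integral_eq_sub_of_hasDerivAt (fun x _ => hdHd x)
          (cd2H.intervalIntegrable _ _)
      have h1 : |dH t| = |∫ s in (1/2:ℝ)..t, d2H s| := by
        rw [hftc, hdHhalf, sub_zero]
      rw [h1]
      have h2 : |∫ s in (1/2:ℝ)..t, d2H s| ≤ ∫ s in (1/2:ℝ)..t, |d2H s| :=
        intervalIntegral.abs_integral_le_integral_abs ht.1
      have h3 := intervalIntegral.integral_add_adjacent_intervals (μ := volume)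
        ((cd2H.abs.intervalIntegrable (1/2) t)) ((cd2H.abs.intervalIntegrable t 1))
      have h4 : 0 ≤ ∫ s in t..(1:ℝ), |d2H s| :=
        intervalIntegral.integral_nonneg ht.2 (fun u _ => abs_nonneg _)
      linarith
    have hdint : ∫ s in (1/2:ℝ)..1, dH s = -1 := by
      rw [intervalIntegral.integral_eq_sub_of_hasDerivAt (fun x _ => hHd x)
        (cdH.intervalIntegrable _ _)]
      rw [hzero 1 (by norm_num), hone (1/2) (by rw [abs_of_nonneg (by norm_num : (0:ℝ) ≤ 1/2)])]
      norm_num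
    have h3 : (1:ℝ) ≤ ∫ s in (1/2:ℝ)..1, |dH s| := by
      have h := intervalIntegral.abs_integral_le_integral_abs (μ := volume) (f := dH)
        (a := 1/2) (b := 1) (by norm_num)
      rw [hdint] at h
      simpa using h
    have h4 : (∫ s in (1/2:ℝ)..1, |dH s|)
        ≤ (1 - 1/2) * ∫ s in (1/2:ℝ)..1, |d2H s| := by
      have h5 := intervalIntegral.integral_mono_on (a := (1/2:ℝ)) (b := (1:ℝ)) (μ := volume)
        (f := fun s => |dH s|) (g := fun _ => ∫ s in (1/2:ℝ)..1, |d2H s|)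
        (by norm_num) (cdH.abs.intervalIntegrable _ _)
        (continuous_const.intervalIntegrable _ _) hdHval
      rwa [intervalIntegral.integral_const, smul_eq_mul] at h5
    have h6 := intervalIntegral.integral_add_adjacent_intervals (μ := volume)
      ((cd2H.abs.intervalIntegrable (-1) (1/2))) ((cd2H.abs.intervalIntegrable (1/2) 1))
    have h7 : 0 ≤ ∫ s in (-1:ℝ)..(1/2:ℝ), |d2H s| :=
      intervalIntegral.integral_nonneg (by norm_num) (fun u _ => abs_nonneg _)
    have hAdef' : A = ∫ t in (-1:ℝ)..1, |d2H t| := hA_def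
    rw [hAdef']
    linarith
  have hIpos : 0 < I := by linarith
  have hApos : 0 < A := by linarith
  have hp1 : (1:ℝ) ≤ (p:ℝ) := by exact_mod_cast hp
  have hn1 : 1 ≤ n := by
    have hq : (1:ℝ) ≤ ((p:ℝ) * A) / I := by
      rw [le_div_iff₀ hIpos]
      nlinarith
    have h1 : (1:ℝ) ≤ Real.sqrt ((p:ℝ) * A / I) := Real.one_le_sqrt.mpr hq
    have h2 : (1:ℝ) ≤ (n:ℝ) := le_trans h1 hn
    exact_mod_cast h2
  have hnR : (1:ℝ) ≤ (n:ℝ) := by exact_mod_cast hn1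
  have hnpos : (0:ℝ) < (n:ℝ) := by linarith
  have hn0 : (n:ℝ) ≠ 0 := ne_of_gt hnpos
  have hKey : (p:ℝ) * A ≤ (n:ℝ)^2 * I := by
    have h0 : 0 ≤ (p:ℝ) * A / I := by positivity
    have hx : (p:ℝ) * A / I ≤ (n:ℝ)^2 := by
      calc (p:ℝ) * A / I = Real.sqrt ((p:ℝ) * A / I) ^ 2 := (Real.sq_sqrt h0).symm
        _ ≤ (n:ℝ)^2 := by
            apply pow_le_pow_left₀ (Real.sqrt_nonneg _) hn
    calc (p:ℝ) * A = ((p:ℝ) * A / I) * I := by field_simp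
      _ ≤ (n:ℝ)^2 * I := mul_le_mul_of_nonneg_right hx (le_of_lt hIpos)
  -- ============ trapezoid machinery ============
  set a : ℕ → ℝ := fun j => (j:ℝ)/n - 1 with ha_def
  have ha0 : a 0 = -1 := by simp [ha_def]
  have haN : a (2*n) = 1 := by
    simp only [ha_def]
    push_cast
    field_simp
    norm_num
  have hstep : ∀ j : ℕ, a (j+1) = a j + 1/n := by
    intro j
    simp only [ha_def]
    push_cast
    field_simp
    ring
  set S : ℝ := ∑ j ∈ Finset.range (2*n+1), f (a j) with hS_def
  have hreindex : (∑ k ∈ Finset.Icc (-(n:ℤ)) (n:ℤ), H ((k : ℝ) / n) ^ p) = S := by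
    have himg : Finset.Icc (-(n:ℤ)) (n:ℤ)
        = Finset.image (fun j : ℕ => (j : ℤ) - n) (Finset.range (2*n+1)) := by
      ext k
      simp only [Finset.mem_Icc, Finset.mem_image, Finset.mem_range]
      constructor
      · intro h
        exact ⟨(k + n).toNat, by omega, by omega⟩
      · rintro ⟨j, hj, rfl⟩
        omega
    rw [himg, Finset.sum_image (fun x _ y _ h => by omega), hS_def]
    apply Finset.sum_congr rfl
    intro j hj
    have harg : ((((j:ℤ) - n) : ℤ) : ℝ) / n = a j := by
      simp only [ha_def]
      push_cast
      field_simp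
    rw [harg]
  set E : ℕ → ℝ := fun j => ∫ x in a j..a (j+1), (x - a j) * (a (j+1) - x) / 2 * F2 x with hE_def
  have hcell : ∀ j : ℕ, ∫ x in a j..a (j+1), f x
      = (1/n) * (f (a j) + f (a (j+1))) / 2 - E j := by
    intro j
    have ht := trap_cell f F1 F2 hfd hF1d cf cF1 cF2 (a j) (a (j+1))
    rw [ht]
    have hE : E j = ∫ x in a j..a (j+1), (x - a j) * (a (j+1) - x) / 2 * F2 x := rfl
    rw [hE, hstep j]
    ring_nf
  have hsplit : I = ∑ j ∈ Finset.range (2*n), ∫ x in a j..a (j+1), f x := by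
    have h := intervalIntegral.sum_integral_adjacent_intervals (μ := volume) (f := f)
      (a := a) (n := 2*n) (fun k _ => cf.intervalIntegrable _ _)
    rw [ha0, haN] at h
    have hIdef' : I = ∫ x in (-1:ℝ)..1, f x := hI_def
    rw [hIdef']
    exact h.symm
  have hf0 : f (a 0) = 0 := by
    rw [ha0]
    show H (-1) ^ p = 0
    rw [hzero (-1) (by norm_num)]
    exact zero_pow (by omega)
  have hfN : f (a (2*n)) = 0 := by
    rw [haN]
    show H 1 ^ p = 0
    rw [hzero 1 (by norm_num)]
    exact zero_pow (by omega)
  have hIS : I = S / n - ∑ j ∈ Finset.range (2*n), E j := by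
    have t1 : ∑ j ∈ Finset.range (2*n+1), f (a j)
        = (∑ j ∈ Finset.range (2*n), f (a (j+1))) + f (a 0) :=
      Finset.sum_range_succ' (fun j => f (a j)) (2*n)
    have t2 : ∑ j ∈ Finset.range (2*n+1), f (a j)
        = (∑ j ∈ Finset.range (2*n), f (a j)) + f (a (2*n)) :=
      Finset.sum_range_succ _ _
    have htel : ∑ j ∈ Finset.range (2*n), (f (a j) + f (a (j+1))) = 2 * S := by
      rw [Finset.sum_add_distrib]
      have hSd : S = ∑ j ∈ Finset.range (2*n+1), f (a j) := hS_def
      rw [hf0] at t1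
      rw [hfN] at t2
      linarith
    calc I = ∑ j ∈ Finset.range (2*n), ((1/(n:ℝ)) * (f (a j) + f (a (j+1))) / 2 - E j) := by
          rw [hsplit]
          exact Finset.sum_congr rfl (fun j _ => hcell j)
      _ = ∑ j ∈ Finset.range (2*n), ((f (a j) + f (a (j+1))) * (1/(2*(n:ℝ))))
            - ∑ j ∈ Finset.range (2*n), E j := by
          rw [← Finset.sum_sub_distrib]
          exact Finset.sum_congr rfl (fun j _ => by ring)
      _ = (∑ j ∈ Finset.range (2*n), (f (a j) + f (a (j+1)))) * (1/(2*(n:ℝ)))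
            - ∑ j ∈ Finset.range (2*n), E j := by
          rw [Finset.sum_mul]
      _ = S / n - ∑ j ∈ Finset.range (2*n), E j := by
          rw [htel]
          field_simp
  have hab : ∀ j : ℕ, a j ≤ a (j+1) := by
    intro j
    rw [hstep j]
    have : 0 < 1/(n:ℝ) := by positivity
    linarith
  have habs : |∑ j ∈ Finset.range (2*n), E j|
      ≤ 1/(8*(n:ℝ)^2) * ∫ x in (-1:ℝ)..1, |F2 x| := by
    have step1 : ∀ j ∈ Finset.range (2*n),
        |E j| ≤ 1/(8*(n:ℝ)^2) * ∫ x in a j..a (j+1), |F2 x| := by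
      intro j _
      have h1 : |E j| ≤ ∫ x in a j..a (j+1), |(x - a j) * (a (j+1) - x) / 2 * F2 x| := by
        have hE : E j = ∫ x in a j..a (j+1), (x - a j) * (a (j+1) - x) / 2 * F2 x := rfl
        rw [hE]
        exact intervalIntegral.abs_integral_le_integral_abs (hab j)
      have h2 : (∫ x in a j..a (j+1), |(x - a j) * (a (j+1) - x) / 2 * F2 x|)
          ≤ ∫ x in a j..a (j+1), 1/(8*(n:ℝ)^2) * |F2 x| := by
        apply intervalIntegral.integral_mono_on (hab j)
        · exact ((((continuous_id.sub continuous_const).mul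
            (continuous_const.sub continuous_id)).div_const 2).mul cF2).abs.intervalIntegrable _ _
        · exact (continuous_const.mul cF2.abs).intervalIntegrable _ _
        intro x hx
        have hu : 0 ≤ x - a j := by linarith [hx.1]
        have hv : 0 ≤ a (j+1) - x := by linarith [hx.2]
        have hsum' : (n:ℝ) * ((x - a j) + (a (j+1) - x)) = 1 := by
          rw [hstep j]
          field_simp
          ring
        rw [abs_mul]
        have hphi : |(x - a j) * (a (j+1) - x) / 2| ≤ 1/(8*(n:ℝ)^2) := by
          rw [abs_of_nonneg (div_nonneg (mul_nonneg hu hv) (by norm_num))]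
          exact kernel_bound _ _ _ hu hv hsum'
        exact mul_le_mul_of_nonneg_right hphi (abs_nonneg _)
      calc |E j| ≤ ∫ x in a j..a (j+1), |(x - a j) * (a (j+1) - x) / 2 * F2 x| := h1
        _ ≤ ∫ x in a j..a (j+1), 1/(8*(n:ℝ)^2) * |F2 x| := h2
        _ = 1/(8*(n:ℝ)^2) * ∫ x in a j..a (j+1), |F2 x| :=
            intervalIntegral.integral_const_mul _ _
    have hsumint : ∑ j ∈ Finset.range (2*n), ∫ x in a j..a (j+1), |F2 x|
        = ∫ x in (-1:ℝ)..1, |F2 x| := by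
      have h := intervalIntegral.sum_integral_adjacent_intervals (μ := volume)
        (f := fun x => |F2 x|) (a := a) (n := 2*n)
        (fun k _ => cF2.abs.intervalIntegrable _ _)
      rw [ha0, haN] at h
      exact h
    calc |∑ j ∈ Finset.range (2*n), E j| ≤ ∑ j ∈ Finset.range (2*n), |E j| :=
        Finset.abs_sum_le_sum_abs _ _
      _ ≤ ∑ j ∈ Finset.range (2*n), 1/(8*(n:ℝ)^2) * ∫ x in a j..a (j+1), |F2 x| :=
        Finset.sum_le_sum step1
      _ = 1/(8*(n:ℝ)^2) * ∑ j ∈ Finset.range (2*n), ∫ x in a j..a (j+1), |F2 x| := by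
        rw [Finset.mul_sum]
      _ = 1/(8*(n:ℝ)^2) * ∫ x in (-1:ℝ)..1, |F2 x| := by rw [hsumint]
  have hF2bound : (∫ x in (-1:ℝ)..1, |F2 x|) ≤ 2 * (p:ℝ) * A := by
    have hud : ∀ x, HasDerivAt (fun x => (p:ℝ) * H x ^ (p - 1))
        ((p:ℝ) * (((p-1 : ℕ):ℝ) * H x ^ (p - 1 - 1) * dH x)) x := fun x =>
      ((hHd x).pow (p-1)).const_mul (p:ℝ)
    have cu : Continuous (fun x : ℝ => (p:ℝ) * H x ^ (p - 1)) := continuous_const.mul (cH.pow _)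
    have cu' : Continuous (fun x : ℝ => (p:ℝ) * (((p-1:ℕ):ℝ) * H x ^ (p - 1 - 1) * dH x)) :=
      continuous_const.mul ((continuous_const.mul (cH.pow _)).mul cdH)
    have hIBP := intervalIntegral.integral_mul_deriv_eq_deriv_mul (a := (-1:ℝ)) (b := 1)
      (u := fun x => (p:ℝ) * H x ^ (p - 1))
      (u' := fun x => (p:ℝ) * (((p-1:ℕ):ℝ) * H x ^ (p - 1 - 1) * dH x))
      (v := dH) (v' := d2H) (fun x _ => hud x) (fun x _ => hdHd x)
      (cu'.intervalIntegrable _ _) (cd2H.intervalIntegrable _ _)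
    simp only [hdHone, hdHmone, mul_zero, sub_zero, zero_sub] at hIBP
    have hGnn : ∀ x : ℝ, 0 ≤ (p:ℝ) * (((p-1:ℕ):ℝ) * H x ^ (p - 1 - 1) * dH x) * dH x := by
      intro x
      have h1 : (p:ℝ) * (((p-1:ℕ):ℝ) * H x ^ (p - 1 - 1) * dH x) * dH x
          = ((p:ℝ) * ((p-1:ℕ):ℝ) * H x ^ (p - 1 - 1)) * (dH x * dH x) := by ring
      rw [h1]
      exact mul_nonneg (mul_nonneg (mul_nonneg (Nat.cast_nonneg p) (Nat.cast_nonneg _))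
        (pow_nonneg (hH0 x) _)) (mul_self_nonneg _)
    have huble : ∀ x : ℝ, |(p:ℝ) * H x ^ (p-1)| ≤ (p:ℝ) := by
      intro x
      rw [abs_of_nonneg (mul_nonneg (Nat.cast_nonneg p) (pow_nonneg (hH0 x) _))]
      calc (p:ℝ) * H x ^ (p-1) ≤ (p:ℝ) * 1 :=
          mul_le_mul_of_nonneg_left (pow_le_one₀ (hH0 x) (hH1 x)) (Nat.cast_nonneg p)
        _ = (p:ℝ) := mul_one _
    have hpt : ∀ x ∈ Set.Icc (-1:ℝ) 1, |F2 x|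
        ≤ (p:ℝ) * (((p-1:ℕ):ℝ) * H x ^ (p - 1 - 1) * dH x) * dH x + (p:ℝ) * |d2H x| := by
      intro x _
      have hF2x : F2 x = (p:ℝ) * (((p-1:ℕ):ℝ) * H x ^ (p-1-1) * dH x) * dH x
          + ((p:ℝ) * H x ^ (p-1)) * d2H x := rfl
      rw [hF2x]
      calc |(p:ℝ) * (((p-1:ℕ):ℝ) * H x ^ (p-1-1) * dH x) * dH x
            + ((p:ℝ) * H x ^ (p-1)) * d2H x|
          ≤ |(p:ℝ) * (((p-1:ℕ):ℝ) * H x ^ (p-1-1) * dH x) * dH x|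
            + |((p:ℝ) * H x ^ (p-1)) * d2H x| := abs_add_le _ _
        _ ≤ (p:ℝ) * (((p-1:ℕ):ℝ) * H x ^ (p-1-1) * dH x) * dH x + (p:ℝ) * |d2H x| := by
            rw [abs_of_nonneg (hGnn x), abs_mul]
            exact add_le_add_right (mul_le_mul_of_nonneg_right (huble x) (abs_nonneg _)) _
    have hmono := intervalIntegral.integral_mono_on (a := (-1:ℝ)) (b := 1) (μ := volume)
      (f := fun x => |F2 x|)
      (g := fun x => (p:ℝ) * (((p-1:ℕ):ℝ) * H x ^ (p-1-1) * dH x) * dH x + (p:ℝ) * |d2H x|)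
      (by norm_num) (cF2.abs.intervalIntegrable _ _)
      (((cu'.mul cdH).add (continuous_const.mul cd2H.abs)).intervalIntegrable _ _) hpt
    rw [intervalIntegral.integral_add (f := fun x => (p:ℝ) * (((p-1:ℕ):ℝ) * H x ^ (p-1-1) * dH x) * dH x)
      (g := fun x => (p:ℝ) * |d2H x|) ((cu'.mul cdH).intervalIntegrable _ _)
      ((continuous_const.mul cd2H.abs).intervalIntegrable _ _),
      intervalIntegral.integral_const_mul] at hmono
    have hG : (∫ x in (-1:ℝ)..1, (p:ℝ) * (((p-1:ℕ):ℝ) * H x ^ (p-1-1) * dH x) * dH x)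
        ≤ (p:ℝ) * A := by
      have e1 : (∫ x in (-1:ℝ)..1, (p:ℝ) * (((p-1:ℕ):ℝ) * H x ^ (p-1-1) * dH x) * dH x)
          = -∫ x in (-1:ℝ)..1, (p:ℝ) * H x ^ (p-1) * d2H x := by linarith [hIBP]
      rw [e1]
      have e2 : -(∫ x in (-1:ℝ)..1, (p:ℝ) * H x ^ (p-1) * d2H x)
          ≤ ∫ x in (-1:ℝ)..1, |(p:ℝ) * H x ^ (p-1) * d2H x| :=
        le_trans (neg_le_abs _) (intervalIntegral.abs_integral_le_integral_abs (by norm_num))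
      have e3 : (∫ x in (-1:ℝ)..1, |(p:ℝ) * H x ^ (p-1) * d2H x|)
          ≤ ∫ x in (-1:ℝ)..1, (p:ℝ) * |d2H x| := by
        apply intervalIntegral.integral_mono_on (by norm_num)
          (((continuous_const.mul (cH.pow _)).mul cd2H).abs.intervalIntegrable _ _)
          ((continuous_const.mul cd2H.abs).intervalIntegrable _ _)
        intro x _
        show |(p:ℝ) * H x ^ (p-1) * d2H x| ≤ (p:ℝ) * |d2H x|
        rw [abs_mul]
        exact mul_le_mul_of_nonneg_right (huble x) (abs_nonneg _)
      rw [intervalIntegral.integral_const_mul] at e3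
      have hAd : A = ∫ t in (-1:ℝ)..1, |d2H t| := hA_def
      rw [hAd]
      linarith
    have hAd : A = ∫ t in (-1:ℝ)..1, |d2H t| := hA_def
    rw [hAd] at hG ⊢
    linarith
  -- ============ final assembly ============
  rw [hreindex]
  have h1 : S - (n:ℝ) * I = (n:ℝ) * ∑ j ∈ Finset.range (2*n), E j := by
    rw [hIS]; field_simp; ring
  rw [h1, abs_mul, abs_of_nonneg (le_of_lt hnpos)]
  have hint_nonneg : 0 ≤ ∫ x in (-1:ℝ)..1, |F2 x| :=
    intervalIntegral.integral_nonneg (by norm_num) (fun u _ => abs_nonneg _)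
  calc (n:ℝ) * |∑ j ∈ Finset.range (2*n), E j|
      ≤ (n:ℝ) * (1/(8*(n:ℝ)^2) * ∫ x in (-1:ℝ)..1, |F2 x|) := by
        exact mul_le_mul_of_nonneg_left habs (le_of_lt hnpos)
    _ ≤ (n:ℝ) * (1/(8*(n:ℝ)^2) * (2 * (p:ℝ) * A)) := by
        apply mul_le_mul_of_nonneg_left _ (le_of_lt hnpos)
        apply mul_le_mul_of_nonneg_left hF2bound
        positivity
    _ = (p:ℝ) * A / (4 * (n:ℝ)) := by field_simp; ring
    _ ≤ ((n:ℝ)^2 * I) / (4 * (n:ℝ)) := by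
        apply div_le_div_of_nonneg_right hKey
        linarith
    _ = (n:ℝ)/4 * I := by field_simp
end

section
/- Let H be a low pass filter and n an integer with n ≥ √(‖H''‖₁ / ‖H‖₁). Then | 1/(n ħ_n ‖H‖₁) − 1 | ≤ 1/4, and consequently 4/(5‖H‖₁) ≤ n ħ_n ≤ 4/(3‖H‖₁). -/
/-- The normalizing constant `ħ_n = (Σ_{|ℓ|<n} H(|ℓ|/n))⁻¹`. -/
noncomputable def hbar (H : ℝ → ℝ) (n : ℕ) : ℝ :=
  (∑ ℓ ∈ Finset.Ioo (-(n:ℤ)) (n:ℤ), H (|(ℓ : ℝ)| / n))⁻¹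


section TaylorAux

private lemma deriv2_eq (f : ℝ → ℝ) : iteratedDeriv 2 f = deriv (deriv f) := by
  simp [iteratedDeriv_succ, iteratedDeriv_one]

lemma taylorPt' {f : ℝ → ℝ} (hf : ContDiff ℝ (⊤ : ℕ∞) f) {m x w : ℝ} (hmx : m ≤ x) (hxw : x ≤ w) :
    |f x - f m - deriv f m * (x - m)| ≤ (x - m) * ∫ v in m..w, |deriv (deriv f) v| := by
  have hf' : ContDiff ℝ (↑(⊤:ℕ∞)) f := hf.of_le (by simp)
  have hd : Differentiable ℝ f := hf'.differentiable (by simp)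
  have hf1 : ContDiff ℝ (↑(⊤:ℕ∞)) (deriv f) := (contDiff_infty_iff_deriv.mp hf').2
  have hd1 : Differentiable ℝ (deriv f) := hf1.differentiable (by simp)
  have hc1 : Continuous (deriv f) := hd1.continuous
  have hc2 : Continuous (deriv (deriv f)) :=
    ((contDiff_infty_iff_deriv.mp hf1).2).continuous
  set A : ℝ → ℝ := fun u => ∫ v in m..u, |deriv (deriv f) v| with hA
  have hAcont : Continuous A :=
    intervalIntegral.continuous_primitive (fun a b => (hc2.abs).intervalIntegrable a b) m
  have hAmono : ∀ u, m ≤ u → u ≤ w → A u ≤ A w := by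
    intro u hu huw
    apply intervalIntegral.integral_mono_interval (le_refl m) hu huw
    · filter_upwards with t using abs_nonneg _
    · exact (hc2.abs).intervalIntegrable _ _
  have hAbound : ∀ u, m ≤ u → u ≤ w → |deriv f u - deriv f m| ≤ A w := by
    intro u hu huw
    have : deriv f u - deriv f m = ∫ v in m..u, deriv (deriv f) v :=
      (intervalIntegral.integral_deriv_eq_sub (fun y _ => hd1 y)
        ((hc2).intervalIntegrable _ _)).symm
    rw [this]
    exact le_trans (intervalIntegral.abs_integral_le_integral_abs hu) (hAmono u hu huw)
  have hg : f x - f m - deriv f m * (x - m) = ∫ u in m..x, (deriv f u - deriv f m) := by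
    rw [intervalIntegral.integral_sub ((hc1).intervalIntegrable _ _)
      (intervalIntegrable_const),
      intervalIntegral.integral_deriv_eq_sub (fun y _ => hd y) ((hc1).intervalIntegrable _ _),
      intervalIntegral.integral_const, smul_eq_mul]
    ring
  rw [hg]
  calc |∫ u in m..x, (deriv f u - deriv f m)| ≤ ∫ u in m..x, |deriv f u - deriv f m| :=
        intervalIntegral.abs_integral_le_integral_abs hmx
    _ ≤ ∫ _u in m..x, A w := by
        apply intervalIntegral.integral_mono_on hmx
          (((hc1.sub continuous_const).abs).intervalIntegrable _ _) intervalIntegrable_const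
        intro u hu; exact hAbound u hu.1 (le_trans hu.2 hxw)
    _ = (x - m) * A w := by rw [intervalIntegral.integral_const, smul_eq_mul]

lemma taylorR {f : ℝ → ℝ} (hf : ContDiff ℝ (⊤ : ℕ∞) f) {m h : ℝ} (hh : 0 ≤ h) :
    |(∫ x in m..(m+h), f x) - (h * f m + h^2/2 * deriv f m)| ≤
      h^2/2 * ∫ x in m..(m+h), |deriv (deriv f) x| := by
  have hf' : ContDiff ℝ (↑(⊤:ℕ∞)) f := hf.of_le (by simp)
  have hd : Differentiable ℝ f := hf'.differentiable (by simp)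
  have hc : Continuous f := hd.continuous
  have hc1 : Continuous (deriv f) :=
    ((contDiff_infty_iff_deriv.mp hf').2.differentiable (by simp)).continuous
  set C : ℝ := ∫ x in m..(m+h), |deriv (deriv f) x| with hC
  set g : ℝ → ℝ := fun x => f x - f m - deriv f m * (x - m) with hgdef
  have hgc : Continuous g := by
    apply (hc.sub continuous_const).sub (continuous_const.mul (continuous_id.sub continuous_const))
  have hkey : ∀ x ∈ Set.Icc m (m+h), |g x| ≤ (x - m) * C :=
    fun x hx => taylorPt' hf hx.1 hx.2
  have hgint : (∫ x in m..(m+h), g x) =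
      (∫ x in m..(m+h), f x) - (h * f m + h^2/2 * deriv f m) := by
    rw [hgdef]
    rw [intervalIntegral.integral_sub (by exact (hc.sub continuous_const).intervalIntegrable _ _)
      (by exact (continuous_const.mul (continuous_id.sub continuous_const)).intervalIntegrable _ _),
      intervalIntegral.integral_sub (hc.intervalIntegrable _ _) intervalIntegrable_const,
      intervalIntegral.integral_const_mul, intervalIntegral.integral_const]
    have : (∫ x in m..(m+h), (x - m)) = h^2/2 := by
      rw [intervalIntegral.integral_comp_sub_right (fun x => x) m, integral_id]
      ring_nf
    rw [this, smul_eq_mul]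
    ring
  have hmh : m ≤ m + h := by linarith
  calc |(∫ x in m..(m+h), f x) - (h * f m + h^2/2 * deriv f m)|
      = |∫ x in m..(m+h), g x| := by rw [hgint]
    _ ≤ ∫ x in m..(m+h), |g x| := intervalIntegral.abs_integral_le_integral_abs hmh
    _ ≤ ∫ x in m..(m+h), (x - m) * C := by
        apply intervalIntegral.integral_mono_on hmh (hgc.abs.intervalIntegrable _ _)
          (((continuous_id.sub continuous_const).mul continuous_const).intervalIntegrable _ _)
        exact hkey
    _ = h^2/2 * C := by
        rw [intervalIntegral.integral_mul_const]
        rw [intervalIntegral.integral_comp_sub_right (fun x => x) m, integral_id]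
        ring_nf

lemma taylorL {f : ℝ → ℝ} (hf : ContDiff ℝ (⊤ : ℕ∞) f) {m h : ℝ} (hh : 0 ≤ h) :
    |(∫ x in (m-h)..m, f x) - (h * f m - h^2/2 * deriv f m)| ≤
      h^2/2 * ∫ x in (m-h)..m, |deriv (deriv f) x| := by
  set g : ℝ → ℝ := fun x => f (2*m - x) with hgdef
  have hg : ContDiff ℝ (⊤ : ℕ∞) g := hf.comp (contDiff_const.sub contDiff_id)
  have hgd : deriv g = fun x => -deriv f (2*m - x) := funext fun x => deriv_comp_const_sub ..
  have hgd2 : deriv (deriv g) = fun x => deriv (deriv f) (2*m - x) := by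
    rw [hgd]; funext x
    rw [deriv.fun_neg, deriv_comp_const_sub, neg_neg]
  have h1 : (∫ x in m..(m+h), g x) = ∫ x in (m-h)..m, f x := by
    rw [hgdef]
    rw [intervalIntegral.integral_comp_sub_left f (2*m)]
    congr 1 <;> ring
  have h2 : (∫ x in m..(m+h), |deriv (deriv g) x|) = ∫ x in (m-h)..m, |deriv (deriv f) x| := by
    rw [hgd2]
    rw [intervalIntegral.integral_comp_sub_left (fun x => |deriv (deriv f) x|) (2*m)]
    congr 1 <;> ring
  have h3 := taylorR hg (m := m) hh
  rw [h1, h2] at h3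
  have h4 : g m = f m := by rw [hgdef]; congr 1; ring
  have h5 : deriv g m = -deriv f m := by rw [hgd]; simp only [neg_inj]; congr 1; ring
  rw [h4, h5] at h3
  convert h3 using 2
  ring

lemma taylorM {f : ℝ → ℝ} (hf : ContDiff ℝ (⊤ : ℕ∞) f) {m h : ℝ} (hh : 0 ≤ h) :
    |(∫ x in (m-h)..(m+h), f x) - 2*h*f m| ≤
      h^2/2 * ∫ x in (m-h)..(m+h), |deriv (deriv f) x| := by
  have hf' : ContDiff ℝ (↑(⊤:ℕ∞)) f := hf.of_le (by simp)
  have hc : Continuous f := (hf'.differentiable (by simp)).continuous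
  have hc2 : Continuous (deriv (deriv f)) :=
    ((contDiff_infty_iff_deriv.mp (contDiff_infty_iff_deriv.mp hf').2).2).continuous
  have hsplit : (∫ x in (m-h)..(m+h), f x) =
      (∫ x in (m-h)..m, f x) + ∫ x in m..(m+h), f x :=
    (intervalIntegral.integral_add_adjacent_intervals (hc.intervalIntegrable _ _)
      (hc.intervalIntegrable _ _)).symm
  have hsplit2 : (∫ x in (m-h)..(m+h), |deriv (deriv f) x|) =
      (∫ x in (m-h)..m, |deriv (deriv f) x|) + ∫ x in m..(m+h), |deriv (deriv f) x| :=
    (intervalIntegral.integral_add_adjacent_intervals (hc2.abs.intervalIntegrable _ _)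
      (hc2.abs.intervalIntegrable _ _)).symm
  have hL := taylorL hf (m := m) hh
  have hR := taylorR hf (m := m) hh
  rw [hsplit, hsplit2]
  calc |(∫ x in (m-h)..m, f x) + (∫ x in m..(m+h), f x) - 2*h*f m|
      = |((∫ x in (m-h)..m, f x) - (h * f m - h^2/2 * deriv f m)) +
          ((∫ x in m..(m+h), f x) - (h * f m + h^2/2 * deriv f m))| := by ring_nf
    _ ≤ _ := by
        refine le_trans (abs_add_le _ _) ?_
        rw [mul_add]
        exact add_le_add hL hR

end TaylorAux

/-- if `n ≥ √(‖H''‖₁/‖H‖₁)` then `|1/(n ħ_n ‖H‖₁) − 1| ≤ 1/4`, and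
consequently `4/(5‖H‖₁) ≤ n ħ_n ≤ 4/(3‖H‖₁)`. -/
theorem hbar_bounds (H : ℝ → ℝ) (hH : IsLowPassFilter H) (n : ℕ)
    (hn : Real.sqrt ((∫ t in (-1:ℝ)..1, |iteratedDeriv 2 H t|) /
        (∫ t in (-1:ℝ)..1, H t)) ≤ n) :
    |1 / (n * hbar H n * ∫ t in (-1:ℝ)..1, H t) - 1| ≤ 1/4 ∧
    4 / (5 * ∫ t in (-1:ℝ)..1, H t) ≤ n * hbar H n ∧
    n * hbar H n ≤ 4 / (3 * ∫ t in (-1:ℝ)..1, H t) := by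
  obtain ⟨hsm, hrange, heven, hone, hzero⟩ := hH
  have hsm' : ContDiff ℝ (↑(⊤:ℕ∞)) H := hsm.of_le (by simp)
  have hHc : Continuous H := (hsm'.differentiable (by simp)).continuous
  have hDc : Continuous (deriv H) :=
    ((contDiff_infty_iff_deriv.mp hsm').2.differentiable (by simp)).continuous
  have hD2c : Continuous (deriv (deriv H)) :=
    ((contDiff_infty_iff_deriv.mp (contDiff_infty_iff_deriv.mp hsm').2).2).continuous
  have hH0 : ∀ t, 0 ≤ H t := fun t => (hrange t).1
  have hDin : ∀ t : ℝ, |t| < 1/2 → deriv H t = 0 := by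
    intro t ht
    have hev : H =ᶠ[nhds t] fun _ => 1 := by
      have hop : IsOpen {s : ℝ | |s| < 1/2} := isOpen_lt continuous_abs continuous_const
      filter_upwards [hop.mem_nhds ht] with s hs using hone s (le_of_lt hs)
    rw [hev.deriv_eq, deriv_const]
  have hDout : ∀ t : ℝ, 1 < |t| → deriv H t = 0 := by
    intro t ht
    have hev : H =ᶠ[nhds t] fun _ => 0 := by
      have hop : IsOpen {s : ℝ | 1 < |s|} := isOpen_lt continuous_const continuous_abs
      filter_upwards [hop.mem_nhds ht] with s hs using hzero s (le_of_lt hs)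
    rw [hev.deriv_eq, deriv_const]
  have hD1 : deriv H 1 = 0 := by
    have h1 : Filter.Tendsto (deriv H) (nhdsWithin 1 (Set.Ioi 1)) (nhds (deriv H 1)) :=
      (hDc.tendsto 1).mono_left nhdsWithin_le_nhds
    have h2 : Filter.Tendsto (deriv H) (nhdsWithin 1 (Set.Ioi 1)) (nhds 0) := by
      apply Filter.Tendsto.congr' _ tendsto_const_nhds
      filter_upwards [self_mem_nhdsWithin] with t ht
      exact (hDout t (by rw [abs_of_pos (lt_trans one_pos ht)]; exact ht)).symm
    exact tendsto_nhds_unique h1 h2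
  have hDm1 : deriv H (-1) = 0 := by
    have h1 : Filter.Tendsto (deriv H) (nhdsWithin (-1) (Set.Iio (-1))) (nhds (deriv H (-1))) :=
      (hDc.tendsto (-1)).mono_left nhdsWithin_le_nhds
    have h2 : Filter.Tendsto (deriv H) (nhdsWithin (-1) (Set.Iio (-1))) (nhds 0) := by
      apply Filter.Tendsto.congr' _ tendsto_const_nhds
      filter_upwards [self_mem_nhdsWithin] with t ht
      have h3 : 1 < |t| := by
        rw [abs_of_neg (by linarith [Set.mem_Iio.mp ht])]; linarith [Set.mem_Iio.mp ht]
      exact (hDout t h3).symm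
    exact tendsto_nhds_unique h1 h2
  set I : ℝ := ∫ t in (-1:ℝ)..1, H t with hIdef
  have hI1 : 1 ≤ I := by
    have hs1 : I = (∫ t in (-1:ℝ)..(-1/2), H t) + ((∫ t in (-1/2:ℝ)..(1/2), H t) +
        (∫ t in (1/2:ℝ)..1, H t)) := by
      rw [intervalIntegral.integral_add_adjacent_intervals (hHc.intervalIntegrable _ _)
        (hHc.intervalIntegrable _ _),
        intervalIntegral.integral_add_adjacent_intervals (hHc.intervalIntegrable _ _)
        (hHc.intervalIntegrable _ _)]
    have hmid : (∫ t in (-1/2:ℝ)..(1/2), H t) = 1 := by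
      rw [intervalIntegral.integral_congr (g := fun _ => (1:ℝ))]
      · norm_num
      · intro t ht
        rw [Set.uIcc_of_le (by norm_num)] at ht
        exact hone t (abs_le.mpr ⟨by linarith [ht.1], by linarith [ht.2]⟩)
    have hle1 : 0 ≤ ∫ t in (-1:ℝ)..(-1/2), H t :=
      intervalIntegral.integral_nonneg (by norm_num) (fun u _ => hH0 u)
    have hle2 : 0 ≤ ∫ t in (1/2:ℝ)..1, H t :=
      intervalIntegral.integral_nonneg (by norm_num) (fun u _ => hH0 u)
    rw [hs1, hmid]; linarith
  have hIpos : 0 < I := lt_of_lt_of_le one_pos hI1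
  set J : ℝ := ∫ t in (-1:ℝ)..1, |deriv (deriv H) t| with hJdef
  have hJrw : (∫ t in (-1:ℝ)..1, |iteratedDeriv 2 H t|) = J := by
    rw [hJdef, deriv2_eq]
  have hJ43 : 4/3 ≤ J := by
    have hpt := taylorPt' hsm (m := (1/4:ℝ)) (x := 1) (w := 1) (by norm_num) le_rfl
    rw [hzero 1 (by norm_num), hone (1/4) (by rw [abs_of_pos]; norm_num; norm_num),
      hDin (1/4) (by rw [abs_of_pos] <;> norm_num)] at hpt
    simp only [mul_zero, sub_zero, zero_sub, zero_mul, abs_neg, abs_one] at hpt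
    have hsub : (∫ v in (1/4:ℝ)..1, |deriv (deriv H) v|) ≤ J := by
      rw [hJdef]
      apply intervalIntegral.integral_mono_interval (by norm_num) (by norm_num) le_rfl
      · filter_upwards with t using abs_nonneg _
      · exact (hD2c.abs).intervalIntegrable _ _
    nlinarith [hpt, hsub]
  have hJpos : 0 < J := by linarith
  rw [hJrw] at hn
  -- n ≥ 1
  have hnn : 1 ≤ n := by
    rcases Nat.eq_zero_or_pos n with h0 | h1
    · exfalso
      rw [h0] at hn
      have : 0 < Real.sqrt (J / I) := Real.sqrt_pos.mpr (div_pos hJpos hIpos)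
      simp at hn
      linarith
    · exact h1
  set nR : ℝ := (n : ℝ) with hnRdef
  have hnRpos : 0 < nR := by
    rw [hnRdef]; exact_mod_cast Nat.lt_of_lt_of_le Nat.zero_lt_one hnn
  have hJI : J ≤ nR^2 * I := by
    have h1 : J / I = (Real.sqrt (J/I))^2 :=
      (Real.sq_sqrt (le_of_lt (div_pos hJpos hIpos))).symm
    have h2 : (Real.sqrt (J/I))^2 ≤ nR^2 :=
      pow_le_pow_left₀ (Real.sqrt_nonneg _) hn 2
    rw [← h1] at h2
    exact (div_le_iff₀ hIpos).mp h2
  -- partition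
  set h : ℝ := 1/(2*nR) with hhdef
  have hhpos : 0 < h := by positivity
  set K : ℕ := 2*n - 1 with hKdef
  have hKR : (K:ℝ) = 2*nR - 1 := by
    rw [hKdef, hnRdef]
    push_cast [Nat.cast_sub (by omega : 1 ≤ 2*n)]
    ring
  set a : ℕ → ℝ := fun i => (2*(i:ℝ) + 1 - 2*nR)/(2*nR) with hadef
  set mm : ℕ → ℝ := fun i => ((i:ℝ) + 1 - nR)/nR with hmdef
  have hma : ∀ i : ℕ, a i = mm i - h ∧ a (i+1) = mm i + h := by
    intro i
    constructor
    · rw [hadef, hmdef, hhdef]; field_simp; ring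
    · rw [hadef, hmdef, hhdef]; push_cast; field_simp; ring
  have hstep : ∀ i : ℕ, |(∫ x in a i..a (i+1), H x) - 2*h*H (mm i)| ≤
      h^2/2 * ∫ x in a i..a (i+1), |deriv (deriv H) x| := by
    intro i
    rw [(hma i).1, (hma i).2]
    exact taylorM hsm hhpos.le
  have htel1 : ∑ i ∈ Finset.range K, (∫ x in a i..a (i+1), H x) = ∫ x in (a 0)..(a K), H x :=
    intervalIntegral.sum_integral_adjacent_intervals (fun i _ => hHc.intervalIntegrable _ _)
  have htel2 : ∑ i ∈ Finset.range K, (∫ x in a i..a (i+1), |deriv (deriv H) x|) =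
      ∫ x in (a 0)..(a K), |deriv (deriv H) x| :=
    intervalIntegral.sum_integral_adjacent_intervals (fun i _ => hD2c.abs.intervalIntegrable _ _)
  have hmid : |(∫ x in (a 0)..(a K), H x) - 2*h*∑ i ∈ Finset.range K, H (mm i)| ≤
      h^2/2 * ∫ x in (a 0)..(a K), |deriv (deriv H) x| := by
    rw [← htel1, ← htel2, Finset.mul_sum, Finset.mul_sum, ← Finset.sum_sub_distrib]
    exact le_trans (Finset.abs_sum_le_sum_abs _ _) (Finset.sum_le_sum fun i _ => hstep i)
  have ha0 : a 0 = -1 + h := by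
    show (2*((0:ℕ):ℝ) + 1 - 2*nR)/(2*nR) = -1 + h
    rw [hhdef]; push_cast; field_simp; ring
  have haK : a K = 1 - h := by
    show (2*((K:ℕ):ℝ) + 1 - 2*nR)/(2*nR) = 1 - h
    rw [hKR, hhdef]; field_simp; ring
  have htL : |∫ x in (-1:ℝ)..(a 0), H x| ≤ h^2/2 * ∫ x in (-1:ℝ)..(a 0), |deriv (deriv H) x| := by
    rw [ha0]
    have := taylorR hsm (m := (-1:ℝ)) hhpos.le
    rw [hzero (-1) (by norm_num), hDm1] at this
    simpa using this
  have htR : |∫ x in (a K)..(1:ℝ), H x| ≤ h^2/2 * ∫ x in (a K)..(1:ℝ), |deriv (deriv H) x| := by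
    rw [haK]
    have := taylorL hsm (m := (1:ℝ)) hhpos.le
    rw [hzero 1 (by norm_num), hD1] at this
    simpa using this
  have hIsplit : I = (∫ x in (-1:ℝ)..(a 0), H x) + ((∫ x in (a 0)..(a K), H x) +
      (∫ x in (a K)..(1:ℝ), H x)) := by
    rw [intervalIntegral.integral_add_adjacent_intervals (hHc.intervalIntegrable _ _)
      (hHc.intervalIntegrable _ _),
      intervalIntegral.integral_add_adjacent_intervals (hHc.intervalIntegrable _ _)
      (hHc.intervalIntegrable _ _)]
  have hJsplit : J = (∫ x in (-1:ℝ)..(a 0), |deriv (deriv H) x|) +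
      ((∫ x in (a 0)..(a K), |deriv (deriv H) x|) +
      (∫ x in (a K)..(1:ℝ), |deriv (deriv H) x|)) := by
    rw [intervalIntegral.integral_add_adjacent_intervals (hD2c.abs.intervalIntegrable _ _)
      (hD2c.abs.intervalIntegrable _ _),
      intervalIntegral.integral_add_adjacent_intervals (hD2c.abs.intervalIntegrable _ _)
      (hD2c.abs.intervalIntegrable _ _)]
  have hfinal : |I - 2*h*∑ i ∈ Finset.range K, H (mm i)| ≤ h^2/2 * J := by
    rw [hIsplit, hJsplit]
    calc |(∫ x in (-1:ℝ)..(a 0), H x) + ((∫ x in (a 0)..(a K), H x) +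
        (∫ x in (a K)..(1:ℝ), H x)) - 2*h*∑ i ∈ Finset.range K, H (mm i)|
        ≤ |∫ x in (-1:ℝ)..(a 0), H x| +
          (|(∫ x in (a 0)..(a K), H x) - 2*h*∑ i ∈ Finset.range K, H (mm i)| +
           |∫ x in (a K)..(1:ℝ), H x|) := by
          have := abs_add_three (∫ x in (-1:ℝ)..(a 0), H x)
            ((∫ x in (a 0)..(a K), H x) - 2*h*∑ i ∈ Finset.range K, H (mm i))
            (∫ x in (a K)..(1:ℝ), H x)
          calc _ = |(∫ x in (-1:ℝ)..(a 0), H x) +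
              ((∫ x in (a 0)..(a K), H x) - 2*h*∑ i ∈ Finset.range K, H (mm i)) +
              (∫ x in (a K)..(1:ℝ), H x)| := by congr 1; ring
            _ ≤ _ := by linarith [this]
      _ ≤ _ := by
          rw [mul_add, mul_add]
          exact add_le_add htL (add_le_add hmid htR)
  -- reindex the sum
  set S : ℝ := ∑ ℓ ∈ Finset.Ioo (-(n:ℤ)) (n:ℤ), H (|(ℓ : ℝ)| / nR) with hSdef
  have habs : ∀ x : ℝ, H (|x|/nR) = H (x/nR) := by
    intro x
    rcases abs_cases x with ⟨he, _⟩ | ⟨he, _⟩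
    · rw [he]
    · rw [he, neg_div, ← heven (x/nR)]
  have hreindex : S = ∑ i ∈ Finset.range K, H (mm i) := by
    rw [hSdef]
    refine Finset.sum_nbij' (i := fun ℓ => (ℓ + (n:ℤ) - 1).toNat)
      (j := fun i => (i:ℤ) - ((n:ℤ) - 1)) ?_ ?_ ?_ ?_ ?_
    · intro ℓ hl
      simp only [Finset.mem_Ioo] at hl
      simp only [Finset.mem_range]
      omega
    · intro i hi
      simp only [Finset.mem_range] at hi
      simp only [Finset.mem_Ioo]
      omega
    · intro ℓ hl
      simp only [Finset.mem_Ioo] at hl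
      omega
    · intro i hi
      simp only [Finset.mem_range] at hi
      omega
    · intro ℓ hl
      simp only [Finset.mem_Ioo] at hl
      rw [habs]
      have h1 : ((ℓ + (n:ℤ) - 1).toNat : ℤ) = ℓ + (n:ℤ) - 1 := Int.toNat_of_nonneg (by omega)
      have hc : ((ℓ + (n:ℤ) - 1).toNat : ℝ) = (ℓ:ℝ) + nR - 1 := by
        calc ((ℓ + (n:ℤ) - 1).toNat : ℝ) = (((ℓ + (n:ℤ) - 1).toNat : ℤ) : ℝ) := by norm_cast
          _ = ((ℓ + (n:ℤ) - 1 : ℤ) : ℝ) := by rw [h1]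
          _ = (ℓ:ℝ) + nR - 1 := by rw [hnRdef]; push_cast; ring
      show H ((ℓ:ℝ)/nR) = H ((((ℓ + (n:ℤ) - 1).toNat : ℝ) + 1 - nR)/nR)
      rw [hc]
      congr 1
      ring
  -- endgame
  have hS' : hbar H n = S⁻¹ := rfl
  have hSnn : (1:ℝ) ≤ S := by
    rw [hSdef]
    have h0mem : (0:ℤ) ∈ Finset.Ioo (-(n:ℤ)) (n:ℤ) := by
      simp only [Finset.mem_Ioo]; omega
    have hs := Finset.single_le_sum (f := fun ℓ : ℤ => H (|(ℓ:ℝ)|/nR))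
      (fun i _ => hH0 _) h0mem
    simp only [Int.cast_zero, abs_zero, zero_div] at hs
    rwa [hone 0 (by norm_num)] at hs
  have hSpos : (0:ℝ) < S := lt_of_lt_of_le one_pos hSnn
  have hkey : |I - S/nR| ≤ I/8 := by
    have e1 : 2*h*∑ i ∈ Finset.range K, H (mm i) = S/nR := by
      rw [← hreindex, hhdef, div_eq_mul_inv, div_eq_mul_inv, mul_inv, mul_comm]
      rw [show ((2:ℝ))*(1*(2⁻¹*nR⁻¹)) = nR⁻¹ by ring]
    have e2 : h^2/2*J ≤ I/8 := by
      rw [hhdef]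
      have he : (1/(2*nR))^2/2 * J = J/(8*nR^2) := by
        rw [div_pow, one_pow, mul_pow]
        rw [div_div, div_mul_eq_mul_div, one_mul, mul_comm]
        ring_nf
      rw [he, div_le_div_iff₀ (by positivity) (by norm_num)]
      calc J * 8 ≤ (nR^2*I) * 8 := by linarith [hJI]
        _ = I * (8*nR^2) := by ring
    calc |I - S/nR| = |I - 2*h*∑ i ∈ Finset.range K, H (mm i)| := by rw [e1]
      _ ≤ h^2/2*J := hfinal
      _ ≤ I/8 := e2
  have hS' : hbar H n = S⁻¹ := rfl
  rw [hS']
  clear hfinal hmid hstep htel1 htel2 htL htR hIsplit hJsplit hreindex habs hma ha0 haK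
    hDin hDout hD1 hDm1 hJrw hn hJI hSnn hJ43 hJpos hHc hDc hD2c hH0 hone hzero heven
    hrange hsm hsm' hnn hS' hI1
  clear_value S I nR J h K a mm
  clear hSdef hIdef hJdef hnRdef hhdef hhpos hKdef hKR hadef hmdef J h K a mm
  have hS_lb : 7/8 * (I*nR) ≤ S := by
    have h1 := (abs_le.mp hkey).2
    have h2 : I - I/8 ≤ S/nR := by linarith
    have h3 := (le_div_iff₀ hnRpos).mp h2
    nlinarith
  have hS_ub : S ≤ 9/8 * (I*nR) := by
    have h1 := (abs_le.mp hkey).1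
    have h2 : S/nR ≤ I + I/8 := by linarith
    have h3 := (div_le_iff₀ hnRpos).mp h2
    nlinarith
  refine ⟨?_, ?_, ?_⟩
  · have hq : 1/(nR * S⁻¹ * I) = S/(nR * I) := by
      field_simp
    rw [hq, abs_le]
    have hnI : 0 < nR * I := by positivity
    constructor
    · have h34 : 3/4 ≤ S/(nR*I) := by
        rw [le_div_iff₀ hnI]; nlinarith
      linarith
    · have h54 : S/(nR*I) ≤ 5/4 := by
        rw [div_le_iff₀ hnI]; nlinarith
      linarith
  · rw [← div_eq_mul_inv, div_le_div_iff₀ (by positivity) hSpos]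
    nlinarith
  · rw [← div_eq_mul_inv, div_le_div_iff₀ hSpos (by positivity)]
    nlinarith
end

section
/- Let n ≥ 1 be an integer, let T(x) = Σ_{|ℓ|<n} b_ℓ e^{iℓx} be a trigonometric polynomial of order < n with complex coefficients b_ℓ, and let N be an integer with N ≥ 4πn. Then (1/2) · sup_{x ∈ ℝ} |T(x)| ≤ max_{0 ≤ k ≤ N} | T(2πk/N) | ≤ sup_{x ∈ ℝ} |T(x)|. -/
/-!
Let `x_k = 2πk/N` and `S_q(t) = ∑_{0 ≤ i < q} e^{iit}`. The kernel
`V(t) = e^{-int} S_{3n}(t) conj (S_n(t))` is a de la Vallée Poussin kernel: its Fourier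
coefficients equal `n` for `|ℓ| ≤ n` and vanish for `|ℓ| ≥ 2n`. As `N ≥ 3n`, sampling on the grid
causes no aliasing, so `N n T(x) = ∑_k T(x_k) V(x - x_k)`. By AM-GM and the discrete Parseval
identity `∑_k |S_q(x - x_k)|² = N q` for `q ≤ N`, we get `∑_k |V(x - x_k)| ≤ (3nN + nN)/2 = 2nN`,
hence `|T(x)| ≤ 2 max_k |T(x_k)|`.
-/

open Complex ComplexConjugate Finset

namespace TrigMesh

noncomputable def expMode (ℓ : ℤ) (t : ℝ) : ℂ := exp (I * ℓ * t)

noncomputable def gridPoint (N k : ℕ) : ℝ := 2 * Real.pi * k / N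

@[simp]
lemma expMode_zero (t : ℝ) : expMode 0 t = 1 := by simp [expMode]

lemma expMode_add (j ℓ : ℤ) (t : ℝ) : expMode (j + ℓ) t = expMode j t * expMode ℓ t := by
  simp only [expMode, ← exp_add]; congr 1; push_cast; ring

lemma expMode_sub_right (ℓ : ℤ) (x y : ℝ) : expMode ℓ (x - y) = expMode ℓ x * expMode (-ℓ) y := by
  simp only [expMode, ← exp_add]; congr 1; push_cast; ring

lemma conj_expMode (ℓ : ℤ) (t : ℝ) : conj (expMode ℓ t) = expMode (-ℓ) t := by
  simp only [expMode, ← exp_conj, map_mul, conj_I, conj_ofReal, map_intCast]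
  congr 1; push_cast; ring

lemma norm_expMode (ℓ : ℤ) (t : ℝ) : ‖expMode ℓ t‖ = 1 := by
  rw [expMode, show I * ℓ * t = ((ℓ * t : ℝ) : ℂ) * I by push_cast; ring, norm_exp_ofReal_mul_I]

lemma sum_expMode_gridPoint {N : ℕ} (hN : 0 < N) (m : ℤ) :
    ∑ k ∈ range N, expMode m (gridPoint N k) = if (N : ℤ) ∣ m then (N : ℂ) else 0 := by
  set ζ := exp (2 * Real.pi * I / N)
  have hζ : IsPrimitiveRoot ζ N := isPrimitiveRoot_exp N hN.ne'
  have hpow (k : ℕ) : expMode m (gridPoint N k) = (ζ ^ m) ^ k := by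
    rw [← exp_int_mul, ← exp_nat_mul, expMode, gridPoint]; congr 1; push_cast; ring
  simp_rw [hpow]
  split_ifs with hdvd
  · simp [(hζ.zpow_eq_one_iff_dvd m).mpr hdvd]
  · have hpowN : (ζ ^ m) ^ N = 1 := by rw [← zpow_natCast, ← zpow_mul, mul_comm, zpow_mul,
      zpow_natCast, hζ.pow_eq_one, one_zpow]
    rw [geom_sum_eq (mt (hζ.zpow_eq_one_iff_dvd m).mp hdvd), hpowN, sub_self, zero_div]

lemma sum_expMode_sub_gridPoint {N : ℕ} {m : ℤ} (hm : |m| < N) (x : ℝ) :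
    ∑ k ∈ range N, expMode m (x - gridPoint N k) = if m = 0 then (N : ℂ) else 0 := by
  have hN : 0 < N := by exact_mod_cast (abs_nonneg m).trans_lt hm
  simp_rw [expMode_sub_right, ← mul_sum, sum_expMode_gridPoint hN, dvd_neg]
  by_cases h0 : m = 0
  · simp [h0]
  · have hndvd : ¬(N : ℤ) ∣ m := fun h => h0 (Int.eq_zero_of_abs_lt_dvd h hm)
    simp [h0, hndvd]

noncomputable def expSum (q : ℕ) (t : ℝ) : ℂ := ∑ i ∈ range q, expMode i t

lemma expSum_mul_conj (q : ℕ) (t : ℝ) :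
    expSum q t * conj (expSum q t) = ∑ i ∈ range q, ∑ j ∈ range q, expMode ((i : ℤ) - j) t := by
  simp_rw [expSum, map_sum, conj_expMode, sum_mul_sum, sub_eq_add_neg, expMode_add]

lemma sum_norm_expSum_sub_gridPoint_sq {q N : ℕ} (hqN : q ≤ N) (x : ℝ) :
    ∑ k ∈ range N, ‖expSum q (x - gridPoint N k)‖ ^ 2 = N * q := by
  have hdiff (i j : ℕ) (hi : i ∈ range q) (hj : j ∈ range q) : |(i : ℤ) - j| < N := by
    rw [mem_range] at hi hj; rw [abs_lt]; omega
  suffices h : ∑ k ∈ range N, ((‖expSum q (x - gridPoint N k)‖ ^ 2 : ℝ) : ℂ) = N * q by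
    exact_mod_cast h
  simp_rw [← normSq_eq_norm_sq, ← mul_conj, expSum_mul_conj]
  rw [sum_comm]
  calc ∑ i ∈ range q, ∑ k ∈ range N, ∑ j ∈ range q, expMode ((i : ℤ) - j) (x - gridPoint N k)
      = ∑ i ∈ range q, ∑ j ∈ range q, ∑ k ∈ range N, expMode ((i : ℤ) - j) (x - gridPoint N k) :=
        sum_congr rfl fun _ _ => sum_comm
    _ = ∑ i ∈ range q, ∑ j ∈ range q, if i = j then (N : ℂ) else 0 := by
        refine sum_congr rfl fun i hi => sum_congr rfl fun j hj => ?_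
        simp only [sum_expMode_sub_gridPoint (hdiff i j hi hj), sub_eq_zero, Nat.cast_inj]
    _ = N * q := by
        rw [sum_congr rfl fun i hi => (sum_ite_eq _ _ _).trans (if_pos hi)]
        simp [mul_comm]

lemma sum_mul_expMode_sub_gridPoint {N : ℕ} {A : Finset ℤ} {b : ℤ → ℂ} {T : ℝ → ℂ}
    (hT : ∀ t, T t = ∑ ℓ ∈ A, b ℓ * expMode ℓ t) {m : ℤ} (hm : ∀ ℓ ∈ A, |m - ℓ| < N) (x : ℝ) :
    ∑ k ∈ range N, T (gridPoint N k) * expMode m (x - gridPoint N k)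
      = N * if m ∈ A then b m * expMode m x else 0 := by
  have hmode (ℓ : ℤ) (y : ℝ) :
      expMode ℓ y * expMode m (x - y) = expMode ℓ x * expMode (m - ℓ) (x - y) := by
    simp only [expMode, ← exp_add]; congr 1; push_cast; ring
  calc ∑ k ∈ range N, T (gridPoint N k) * expMode m (x - gridPoint N k)
      = ∑ ℓ ∈ A, b ℓ * expMode ℓ x * ∑ k ∈ range N, expMode (m - ℓ) (x - gridPoint N k) := by
        simp_rw [hT, sum_mul, mul_sum, mul_assoc, hmode]
        exact sum_comm
    _ = ∑ ℓ ∈ A, if m = ℓ then N * (b ℓ * expMode ℓ x) else 0 := by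
        refine sum_congr rfl fun ℓ hℓ => ?_
        simp only [sum_expMode_sub_gridPoint (hm ℓ hℓ), sub_eq_zero]
        split_ifs <;> ring
    _ = N * if m ∈ A then b m * expMode m x else 0 := by
        rw [sum_ite_eq]; split_ifs <;> simp

lemma sum_range_ite_add_mem {M : Type*} [AddCommMonoid M] (g : ℤ → M) {A : Finset ℤ} {c : ℤ}
    {q : ℕ} (hA : A ⊆ Ico c (c + q)) :
    ∑ i ∈ range q, (if c + i ∈ A then g (c + i) else 0) = ∑ ℓ ∈ A, g ℓ := by
  have hIco : ∑ ℓ ∈ Ico c (c + q), (if ℓ ∈ A then g ℓ else 0)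
      = ∑ i ∈ range q, (if c + i ∈ A then g (c + i) else 0) := by
    rw [Int.Ico_eq_finset_map, sum_map, add_sub_cancel_left, Int.toNat_natCast]
    rfl
  rw [← hIco, sum_ite_mem, inter_eq_right.mpr hA]

noncomputable def vallePoussinKernel (n : ℕ) (t : ℝ) : ℂ :=
  expMode (-n) t * expSum (3 * n) t * conj (expSum n t)

lemma vallePoussinKernel_eq_sum (n : ℕ) (t : ℝ) :
    vallePoussinKernel n t = ∑ j ∈ range n, ∑ i ∈ range (3 * n), expMode (-n - j + i) t := by
  simp_rw [vallePoussinKernel, expSum, map_sum, conj_expMode, mul_sum, sum_mul,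
    ← expMode_add]
  refine sum_congr rfl fun j _ => sum_congr rfl fun i _ => ?_
  congr 1; ring

lemma norm_vallePoussinKernel_le (n : ℕ) (t : ℝ) :
    ‖vallePoussinKernel n t‖ ≤ (‖expSum (3 * n) t‖ ^ 2 + ‖expSum n t‖ ^ 2) / 2 := by
  rw [vallePoussinKernel, norm_mul, norm_mul, norm_expMode, one_mul, Complex.norm_conj]
  nlinarith [sq_nonneg (‖expSum (3 * n) t‖ - ‖expSum n t‖)]

lemma sum_norm_vallePoussinKernel_sub_gridPoint_le {n N : ℕ} (hN : 3 * n ≤ N) (x : ℝ) :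
    ∑ k ∈ range N, ‖vallePoussinKernel n (x - gridPoint N k)‖ ≤ 2 * N * n := by
  calc ∑ k ∈ range N, ‖vallePoussinKernel n (x - gridPoint N k)‖
      ≤ ∑ k ∈ range N, (‖expSum (3 * n) (x - gridPoint N k)‖ ^ 2
          + ‖expSum n (x - gridPoint N k)‖ ^ 2) / 2 :=
        sum_le_sum fun k _ => norm_vallePoussinKernel_le n _
    _ = 2 * N * n := by
        rw [← sum_div, sum_add_distrib, sum_norm_expSum_sub_gridPoint_sq hN,
          sum_norm_expSum_sub_gridPoint_sq (by omega)]
        push_cast; ring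

lemma sum_mul_vallePoussinKernel_sub_gridPoint {n N : ℕ} (hN : 3 * n ≤ N) {b : ℤ → ℂ}
    {T : ℝ → ℂ} (hT : ∀ t, T t = ∑ ℓ ∈ Ioo (-(n : ℤ)) n, b ℓ * expMode ℓ t) (x : ℝ) :
    ∑ k ∈ range N, T (gridPoint N k) * vallePoussinKernel n (x - gridPoint N k) = N * n * T x := by
  calc ∑ k ∈ range N, T (gridPoint N k) * vallePoussinKernel n (x - gridPoint N k)
      = ∑ j ∈ range n, ∑ i ∈ range (3 * n),
          ∑ k ∈ range N, T (gridPoint N k) * expMode (-n - j + i) (x - gridPoint N k) := by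
        simp_rw [vallePoussinKernel_eq_sum, mul_sum]
        rw [sum_comm]
        exact sum_congr rfl fun _ _ => sum_comm
    _ = ∑ j ∈ range n, N * T x := by
        refine sum_congr rfl fun j hj => ?_
        rw [mem_range] at hj
        have hwindow : Ioo (-(n : ℤ)) n ⊆ Ico (-n - j) (-n - j + (3 * n : ℕ)) := by
          intro ℓ; simp only [mem_Ioo, mem_Ico]; omega
        have halias (i : ℕ) (hi : i ∈ range (3 * n)) :
            ∀ ℓ ∈ Ioo (-(n : ℤ)) n, |(-n - j + i : ℤ) - ℓ| < N := by
          rw [mem_range] at hi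
          intro ℓ hℓ; rw [mem_Ioo] at hℓ; rw [abs_lt]; omega
        rw [sum_congr rfl fun i hi => sum_mul_expMode_sub_gridPoint hT (halias i hi) x, ← mul_sum,
          sum_range_ite_add_mem (fun ℓ => b ℓ * expMode ℓ x) hwindow, hT x]
    _ = N * n * T x := by simp; ring

theorem norm_le_two_mul_of_norm_gridPoint_le {n N : ℕ} (hn : 0 < n) (hN : 3 * n ≤ N)
    {b : ℤ → ℂ} {T : ℝ → ℂ} (hT : ∀ t, T t = ∑ ℓ ∈ Ioo (-(n : ℤ)) n, b ℓ * expMode ℓ t)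
    {M : ℝ} (hM : ∀ k < N, ‖T (gridPoint N k)‖ ≤ M) (x : ℝ) : ‖T x‖ ≤ 2 * M := by
  have hNn : (0 : ℝ) < N * n := by
    have : 0 < N := by omega
    positivity
  have hM0 : 0 ≤ M := (norm_nonneg _).trans (hM 0 (by omega))
  refine le_of_mul_le_mul_left ?_ hNn
  calc (N * n : ℝ) * ‖T x‖
      = ‖∑ k ∈ range N, T (gridPoint N k) * vallePoussinKernel n (x - gridPoint N k)‖ := by
        rw [sum_mul_vallePoussinKernel_sub_gridPoint hN hT, norm_mul, norm_mul]; simp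
    _ ≤ ∑ k ∈ range N, M * ‖vallePoussinKernel n (x - gridPoint N k)‖ := by
        refine (norm_sum_le _ _).trans (sum_le_sum fun k hk => ?_)
        rw [norm_mul]
        exact mul_le_mul_of_nonneg_right (hM k (mem_range.mp hk)) (norm_nonneg _)
    _ ≤ M * (2 * N * n) := by
        rw [← mul_sum]
        exact mul_le_mul_of_nonneg_left (sum_norm_vallePoussinKernel_sub_gridPoint_le hN x) hM0
    _ = N * n * (2 * M) := by ring

end TrigMesh

/-- mesh-norm inequality for trigonometric polynomials of order `< n`:
if `N ≥ 4πn` then the max of `|T|` over the grid `2πk/N`, `0 ≤ k ≤ N`, is between half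
the sup norm and the sup norm of `T`. -/
theorem trig_poly_mesh_norm (n : ℕ) (hn : 1 ≤ n) (b : ℤ → ℂ) (T : ℝ → ℂ)
    (hT : ∀ x : ℝ, T x = ∑ ℓ ∈ Finset.Ioo (-(n:ℤ)) (n:ℤ),
        b ℓ * Complex.exp (Complex.I * ℓ * x))
    (N : ℕ) (hN : 4 * Real.pi * n ≤ N) :
    (1/2) * (⨆ x : ℝ, ‖T x‖)
        ≤ (Finset.Icc 0 N).sup' ⟨0, by simp⟩ (fun k => ‖T (2 * Real.pi * k / N)‖) ∧
    (Finset.Icc 0 N).sup' ⟨0, by simp⟩ (fun k => ‖T (2 * Real.pi * k / N)‖)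
        ≤ ⨆ x : ℝ, ‖T x‖ := by
  have h3n : 3 * n ≤ N := by
    have : (3 * n : ℝ) ≤ N := by nlinarith [Real.pi_gt_three, n.cast_nonneg (α := ℝ)]
    exact_mod_cast this
  set M := (Finset.Icc 0 N).sup' ⟨0, by simp⟩ (fun k => ‖T (2 * Real.pi * k / N)‖)
  have hbound : ∀ x, ‖T x‖ ≤ 2 * M :=
    TrigMesh.norm_le_two_mul_of_norm_gridPoint_le hn h3n hT fun k hk =>
      Finset.le_sup' (fun k : ℕ => ‖T (2 * Real.pi * k / N)‖) (by simp; omega)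
  have hbdd : BddAbove (Set.range fun x => ‖T x‖) := ⟨2 * M, Set.forall_mem_range.mpr hbound⟩
  exact ⟨by linarith [ciSup_le hbound], Finset.sup'_le _ _ fun k _ => le_ciSup hbdd _⟩
end

section
/- Let K ≥ 1, let A₁, …, A_K : ℝ → ℂ be continuous, let φ₁, …, φ_K : ℝ → ℝ be continuously differentiable, and set f(t) = Σ_{j=1}^{K} A_j(t) e^{iφ_j(t)} and f_j(t) = A_j(t) e^{iφ_j(t)}. Let t* ∈ ℝ and α, Δ > 0 be such that for every j and every u with |u| ≤ Δ: |A_j(t*+u) − A_j(t*)| ≤ α|u| |A_j(t*)| and |φ_j'(t*+u) − φ_j'(t*)| ≤ α|u| |φ_j'(t*)|. Set M = Σ_{j=1}^{K} |A_j(t*)| and B = max_{1≤j≤K} |φ_j'(t*)|. Then for every u with |u| ≤ Δ, | f(t*+u) − Σ_{j=1}^{K} f_j(t*) e^{iφ_j'(t*) u} | ≤ α M (BΔ + 1) Δ. -/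
/-!
Each component is linearised separately. On `|u| ≤ Δ` the slow variation of `φⱼ'` and the mean
value inequality bound the phase error `φⱼ(t* + u) - φⱼ(t*) - φⱼ'(t*) u` by `α B Δ²`, the map
`θ ↦ e^{iθ}` is 1-Lipschitz, and the amplitude error is at most `α Δ |Aⱼ(t*)|`; so the `j`-th
component is off by at most `α |Aⱼ(t*)| (B Δ + 1) Δ`, and the triangle inequality sums these to
`α M (B Δ + 1) Δ`.
-/

open Complex

theorem norm_image_add_sub_sub_smul_deriv_le {E : Type*} [NormedAddCommGroup E]
    [NormedSpace ℝ E] {f : ℝ → E} (hf : Differentiable ℝ f) {t u C : ℝ}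
    (hC : ∀ s ∈ Set.uIcc 0 u, ‖deriv f (t + s) - deriv f t‖ ≤ C) :
    ‖f (t + u) - f t - u • deriv f t‖ ≤ C * |u| := by
  have hderiv : ∀ s : ℝ, HasDerivAt (fun s ↦ f (t + s) - s • deriv f t)
      (deriv f (t + s) - deriv f t) s := fun s ↦ by
    have h := ((hf (t + s)).hasDerivAt.comp_const_add t s).sub
      ((hasDerivAt_id s).smul_const (deriv f t))
    rwa [one_smul] at h
  have key := (convex_uIcc 0 u).norm_image_sub_le_of_norm_hasDerivWithin_le
    (fun s _ ↦ (hderiv s).hasDerivWithinAt) hC Set.left_mem_uIcc Set.right_mem_uIcc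
  simpa [sub_right_comm _ (f t), Real.norm_eq_abs] using key

theorem norm_exp_I_mul_ofReal_sub_exp_I_mul_ofReal_le (x y : ℝ) :
    ‖exp (I * x) - exp (I * y)‖ ≤ |x - y| := by
  have hsplit : exp (I * x) - exp (I * y) = exp (I * y) * (exp (I * ↑(x - y)) - 1) := by
    rw [mul_sub, ← exp_add]; push_cast; ring_nf
  rw [hsplit, norm_mul, norm_exp_I_mul_ofReal, one_mul, ← Real.norm_eq_abs]
  exact Real.norm_exp_I_mul_ofReal_sub_one_le

theorem norm_mul_exp_I_sub_mul_exp_I_le (a b : ℂ) (x y : ℝ) :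
    ‖a * exp (I * x) - b * exp (I * y)‖ ≤ ‖a - b‖ + ‖b‖ * |x - y| :=
  calc ‖a * exp (I * x) - b * exp (I * y)‖
      = ‖(a - b) * exp (I * x) + b * (exp (I * x) - exp (I * y))‖ := by ring_nf
    _ ≤ ‖a - b‖ + ‖b‖ * |x - y| := by
      grw [norm_add_le, norm_mul, norm_mul, norm_exp_I_mul_ofReal, mul_one,
        norm_exp_I_mul_ofReal_sub_exp_I_mul_ofReal_le]

theorem norm_mul_exp_I_sub_linearization_le (a : ℝ → ℂ) {ψ : ℝ → ℝ}
    (hψ : Differentiable ℝ ψ) {t α Δ b u : ℝ} (hα : 0 ≤ α) (hb : |deriv ψ t| ≤ b)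
    (ha : ‖a (t + u) - a t‖ ≤ α * |u| * ‖a t‖)
    (hψ' : ∀ s : ℝ, |s| ≤ Δ → |deriv ψ (t + s) - deriv ψ t| ≤ α * |s| * |deriv ψ t|)
    (hu : |u| ≤ Δ) :
    ‖a (t + u) * exp (I * ψ (t + u)) -
        a t * exp (I * ψ t) * exp (I * ((deriv ψ t * u : ℝ) : ℂ))‖
      ≤ ‖a t‖ * (α * (b * Δ + 1) * Δ) := by
  have hΔ : 0 ≤ Δ := (abs_nonneg u).trans hu
  have hb0 : 0 ≤ b := (abs_nonneg _).trans hb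
  have hphase : |ψ (t + u) - (ψ t + deriv ψ t * u)| ≤ α * Δ * b * Δ := by
    have hC : ∀ s ∈ Set.uIcc 0 u, ‖deriv ψ (t + s) - deriv ψ t‖ ≤ α * Δ * b := by
      intro s hs
      have hsΔ : |s| ≤ Δ := by simpa using (Set.abs_sub_left_of_mem_uIcc hs).trans (by simpa using hu)
      calc ‖deriv ψ (t + s) - deriv ψ t‖ ≤ α * |s| * |deriv ψ t| := hψ' s hsΔ
        _ ≤ α * Δ * b := by gcongr
    have taylor := norm_image_add_sub_sub_smul_deriv_le hψ hC
    rw [Real.norm_eq_abs, smul_eq_mul] at taylor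
    calc |ψ (t + u) - (ψ t + deriv ψ t * u)| = |ψ (t + u) - ψ t - u * deriv ψ t| := by ring_nf
      _ ≤ α * Δ * b * |u| := taylor
      _ ≤ α * Δ * b * Δ := by gcongr
  have hlin : a t * exp (I * ψ t) * exp (I * ((deriv ψ t * u : ℝ) : ℂ))
      = a t * exp (I * ↑(ψ t + deriv ψ t * u)) := by
    rw [mul_assoc, ← exp_add]; push_cast; ring_nf
  have hamp : α * |u| * ‖a t‖ ≤ α * Δ * ‖a t‖ := by gcongr
  rw [hlin]
  calc _ ≤ ‖a (t + u) - a t‖ + ‖a t‖ * |ψ (t + u) - (ψ t + deriv ψ t * u)| :=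
        norm_mul_exp_I_sub_mul_exp_I_le _ _ _ _
    _ ≤ α * Δ * ‖a t‖ + ‖a t‖ * (α * Δ * b * Δ) := by grw [ha, hamp, hphase]
    _ = ‖a t‖ * (α * (b * Δ + 1) * Δ) := by ring

theorem reduction_to_constant_parameters_general
    (K : ℕ)
    (A : Fin K → ℝ → ℂ)
    (φ : Fin K → ℝ → ℝ) (hφ : ∀ j, ContDiff ℝ 1 (φ j))
    (f : ℝ → ℂ) (hf : ∀ t, f t = ∑ j, A j t * Complex.exp (Complex.I * (φ j t : ℂ)))
    (fc : Fin K → ℝ → ℂ)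
    (hfc : ∀ j t, fc j t = A j t * Complex.exp (Complex.I * (φ j t : ℂ)))
    (tstar : ℝ) (α Δ : ℝ) (hα : 0 < α)
    (hAslow : ∀ j, ∀ u : ℝ, |u| ≤ Δ →
      ‖A j (tstar + u) - A j tstar‖ ≤ α * |u| * ‖A j tstar‖)
    (hφslow : ∀ j, ∀ u : ℝ, |u| ≤ Δ →
      |deriv (φ j) (tstar + u) - deriv (φ j) tstar| ≤ α * |u| * |deriv (φ j) tstar|)
    (M : ℝ) (hM : M = ∑ j, ‖A j tstar‖)
    (B : ℝ) (hB : (∀ j, |deriv (φ j) tstar| ≤ B) ∧ ∃ j, |deriv (φ j) tstar| = B) :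
    ∀ u : ℝ, |u| ≤ Δ →
      ‖f (tstar + u) -
          ∑ j, fc j tstar * Complex.exp (Complex.I * ((deriv (φ j) tstar * u : ℝ) : ℂ))‖
        ≤ α * M * (B * Δ + 1) * Δ := by
  intro u hu
  have hcomponent : ∀ j, ‖A j (tstar + u) * exp (I * φ j (tstar + u)) -
      fc j tstar * exp (I * ((deriv (φ j) tstar * u : ℝ) : ℂ))‖
        ≤ ‖A j tstar‖ * (α * (B * Δ + 1) * Δ) := fun j ↦ by
    rw [hfc]
    exact norm_mul_exp_I_sub_linearization_le (A j) ((hφ j).differentiable one_ne_zero)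
      hα.le (hB.1 j) (hAslow j u hu) (hφslow j) hu
  rw [hf, ← Finset.sum_sub_distrib, hM, mul_assoc, mul_assoc, Finset.sum_mul, Finset.mul_sum]
  refine (norm_sum_le _ _).trans (Finset.sum_le_sum fun j _ ↦ ?_)
  linarith [hcomponent j]

/-- reduction of a superposition of AM–FM components to the constant
parameter case on a small interval around `t*`. -/
theorem reduction_to_constant_parameters
    (K : ℕ) (hK : 1 ≤ K)
    (A : Fin K → ℝ → ℂ) (hA : ∀ j, Continuous (A j))
    (φ : Fin K → ℝ → ℝ) (hφ : ∀ j, ContDiff ℝ 1 (φ j))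
    (f : ℝ → ℂ) (hf : ∀ t, f t = ∑ j, A j t * Complex.exp (Complex.I * (φ j t : ℂ)))
    (fc : Fin K → ℝ → ℂ)
    (hfc : ∀ j t, fc j t = A j t * Complex.exp (Complex.I * (φ j t : ℂ)))
    (tstar : ℝ) (α Δ : ℝ) (hα : 0 < α) (hΔ : 0 < Δ)
    (hAslow : ∀ j, ∀ u : ℝ, |u| ≤ Δ →
      ‖A j (tstar + u) - A j tstar‖ ≤ α * |u| * ‖A j tstar‖)
    (hφslow : ∀ j, ∀ u : ℝ, |u| ≤ Δ →
      |deriv (φ j) (tstar + u) - deriv (φ j) tstar| ≤ α * |u| * |deriv (φ j) tstar|)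
    (M : ℝ) (hM : M = ∑ j, ‖A j tstar‖)
    (B : ℝ) (hB : (∀ j, |deriv (φ j) tstar| ≤ B) ∧ ∃ j, |deriv (φ j) tstar| = B) :
    ∀ u : ℝ, |u| ≤ Δ →
      ‖f (tstar + u) -
          ∑ j, fc j tstar * Complex.exp (Complex.I * ((deriv (φ j) tstar * u : ℝ) : ℂ))‖
        ≤ α * M * (B * Δ + 1) * Δ :=
  reduction_to_constant_parameters_general K A φ hφ f hf fc hfc tstar α Δ hα hAslow hφslow M hM B hB
end

section
/- Let H be a low pass filter, let K ≥ 1, let A₁, …, A_K : ℝ → ℂ be continuous, let φ₁, …, φ_K : ℝ → ℝ be continuously differentiable, and set f(t) = Σ_{j=1}^{K} A_j(t) e^{iφ_j(t)} and f_j(t) = A_j(t) e^{iφ_j(t)}. Let t* ∈ ℝ, α, Δ, R > 0 with n = ⌊RΔ⌋ ≥ 1, and assume that for every j and every u with |u| ≤ Δ: |A_j(t*+u) − A_j(t*)| ≤ α|u| |A_j(t*)| and |φ_j'(t*+u) − φ_j'(t*)| ≤ α|u| |φ_j'(t*)|. Set M = Σ_j |A_j(t*)|, B = max_j |φ_j'(t*)|,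 λ_j = φ_j'(t*)/R, and μ̂(ℓ) = Σ_{j=1}^{K} f_j(t*) e^{−iℓλ_j}. Then for every x ∈ ℝ, | ħ_n Σ_{|ℓ|<n} H(|ℓ|/n) f(t* − ℓ/R) e^{iℓx} − ħ_n Σ_{|ℓ|<n} H(|ℓ|/n) μ̂(ℓ) e^{iℓx} | ≤ α M (BΔ + 1) Δ. -/
lemma exp_I_lip (a b : ℝ) :
    ‖Complex.exp (Complex.I * a) - Complex.exp (Complex.I * b)‖ ≤ |a - b| := by
  have h : ∀ s : ℝ, HasDerivAt (fun t : ℝ => Complex.exp (Complex.I * t))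
      (Complex.I * Complex.exp (Complex.I * s)) s := by
    intro s
    have h1 : HasDerivAt (fun t : ℂ => Complex.exp (Complex.I * t))
        (Complex.exp (Complex.I * s) * Complex.I) (s : ℂ) :=
      by simpa [mul_comm] using ((hasDerivAt_id (s : ℂ)).const_mul Complex.I).cexp
    simpa [mul_comm] using h1.comp_ofReal
  have := Convex.norm_image_sub_le_of_norm_hasDerivWithin_le
    (f := fun t : ℝ => Complex.exp (Complex.I * t))
    (f' := fun s : ℝ => Complex.I * Complex.exp (Complex.I * s)) (C := 1) (s := Set.univ)
    (fun y _ => (h y).hasDerivWithinAt) (fun y _ => by simp [Complex.norm_exp]) convex_univ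
    (Set.mem_univ b) (Set.mem_univ a)
  simpa [Real.norm_eq_abs] using this

lemma taylor_bound {φ : ℝ → ℝ} (hφ : ContDiff ℝ 1 φ) {t α Δ Bj : ℝ} (hΔ : 0 < Δ)
    (hslow : ∀ u : ℝ, |u| ≤ Δ → |deriv φ (t + u) - deriv φ t| ≤ α * |u| * |deriv φ t|)
    (hBj : |deriv φ t| ≤ Bj) (hα : 0 ≤ α) {u : ℝ} (hu : |u| ≤ Δ) :
    |φ (t + u) - φ t - u * deriv φ t| ≤ α * Δ * Bj * |u| := by
  set c := deriv φ t with hc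
  have hder : ∀ s : ℝ, HasDerivAt (fun s : ℝ => φ (t + s) - s * c)
      (deriv φ (t + s) - c) s := by
    intro s
    have h1 : HasDerivAt (fun s : ℝ => φ (t + s)) (deriv φ (t + s)) s := by
      have h2 := ((hφ.differentiable (by norm_num)) (t + s)).hasDerivAt
      exact (h2.comp s ((hasDerivAt_id s).const_add t)).congr_deriv (mul_one _)
    exact h1.sub (hasDerivAt_mul_const c)
  have hbound : ∀ s ∈ Set.Icc (-Δ) Δ, ‖deriv φ (t + s) - c‖ ≤ α * Δ * Bj := by
    intro s hs
    have hsΔ : |s| ≤ Δ := abs_le.mpr ⟨hs.1, hs.2⟩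
    refine (hslow s hsΔ).trans ?_
    have h1 : α * |s| * |c| ≤ α * Δ * Bj := by
      have := mul_le_mul (mul_le_mul_of_nonneg_left hsΔ hα) hBj (abs_nonneg _)
        (by positivity)
      linarith
    simpa [Real.norm_eq_abs] using h1
  have := Convex.norm_image_sub_le_of_norm_hasDerivWithin_le
    (f := fun s : ℝ => φ (t + s) - s * c) (f' := fun s => deriv φ (t + s) - c)
    (s := Set.Icc (-Δ) Δ) (x := (0:ℝ)) (y := u)
    (fun y hy => (hder y).hasDerivWithinAt) hbound (convex_Icc _ _)
    (Set.mem_Icc.mpr ⟨by linarith, by linarith⟩)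
    (Set.mem_Icc.mpr ⟨by linarith [(abs_le.mp hu).1], by linarith [(abs_le.mp hu).2]⟩)
  have heq : φ (t + u) - u * c - φ t = φ (t + u) - φ t - u * c := by ring
  simpa [Real.norm_eq_abs, sub_zero, heq] using this

/-- the signal separation operator applied to a superposition of AM–FM
components is uniformly close to the one applied to the associated constant-parameter
exponential sum. -/
theorem sso_close_to_constant_parameter_case
    (H : ℝ → ℝ) (hH : IsLowPassFilter H)
    (K : ℕ) (hK : 1 ≤ K)
    (A : Fin K → ℝ → ℂ) (hA : ∀ j, Continuous (A j))
    (φ : Fin K → ℝ → ℝ) (hφ : ∀ j, ContDiff ℝ 1 (φ j))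
    (f : ℝ → ℂ) (hf : ∀ t, f t = ∑ j, A j t * Complex.exp (Complex.I * (φ j t : ℂ)))
    (fc : Fin K → ℝ → ℂ)
    (hfc : ∀ j t, fc j t = A j t * Complex.exp (Complex.I * (φ j t : ℂ)))
    (tstar : ℝ) (α Δ R : ℝ) (hα : 0 < α) (hΔ : 0 < Δ) (hR : 0 < R)
    (n : ℕ) (hn : n = ⌊R * Δ⌋₊) (hn1 : 1 ≤ n)
    (hAslow : ∀ j, ∀ u : ℝ, |u| ≤ Δ →
      ‖A j (tstar + u) - A j tstar‖ ≤ α * |u| * ‖A j tstar‖)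
    (hφslow : ∀ j, ∀ u : ℝ, |u| ≤ Δ →
      |deriv (φ j) (tstar + u) - deriv (φ j) tstar| ≤ α * |u| * |deriv (φ j) tstar|)
    (M : ℝ) (hM : M = ∑ j, ‖A j tstar‖)
    (B : ℝ) (hB : (∀ j, |deriv (φ j) tstar| ≤ B) ∧ ∃ j, |deriv (φ j) tstar| = B)
    (lam : Fin K → ℝ) (hlam : ∀ j, lam j = deriv (φ j) tstar / R)
    (μhat : ℤ → ℂ)
    (hμ : ∀ ℓ : ℤ, μhat ℓ = ∑ j, fc j tstar * Complex.exp (-Complex.I * ℓ * (lam j : ℂ))) :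
    ∀ x : ℝ,
      ‖
        ((hbar H n : ℂ) * ∑ ℓ ∈ Finset.Ioo (-(n:ℤ)) (n:ℤ),
            (H (|(ℓ : ℝ)| / n) : ℂ) * f (tstar - ℓ / R) * Complex.exp (Complex.I * ℓ * x) -
          (hbar H n : ℂ) * ∑ ℓ ∈ Finset.Ioo (-(n:ℤ)) (n:ℤ),
            (H (|(ℓ : ℝ)| / n) : ℂ) * μhat ℓ * Complex.exp (Complex.I * ℓ * x))‖
        ≤ α * M * (B * Δ + 1) * Δ := by
  intro x
  obtain ⟨hHsmooth, hH01, hHeven, hH1, hH0⟩ := hH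
  have hα0 : (0:ℝ) ≤ α := le_of_lt hα
  have hB0 : 0 ≤ B := by
    obtain ⟨j, hj⟩ := hB.2
    rw [← hj]; exact abs_nonneg _
  set T := Finset.Ioo (-(n:ℤ)) (n:ℤ) with hT
  set S := ∑ ℓ ∈ T, H (|(ℓ:ℝ)| / n) with hS
  have hS1 : (1:ℝ) ≤ S := by
    have h0 : (0:ℤ) ∈ T := by
      rw [hT, Finset.mem_Ioo]
      constructor <;> [exact neg_neg_of_pos (by exact_mod_cast hn1); exact_mod_cast hn1]
    have := Finset.single_le_sum (f := fun ℓ : ℤ => H (|(ℓ:ℝ)|/n))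
      (fun i _ => (hH01 _).1) h0
    simpa [hH1 0 (by norm_num)] using this
  have hSpos : 0 < S := lt_of_lt_of_le one_pos hS1
  have hbar_eq : hbar H n = S⁻¹ := rfl
  have hE0 : (0:ℝ) ≤ α * M * (B * Δ + 1) * Δ := by
    have hM0 : 0 ≤ M := by
      rw [hM]; exact Finset.sum_nonneg fun j _ => norm_nonneg _
    positivity
  -- key pointwise bound
  have key : ∀ ℓ ∈ T, ‖f (tstar - ℓ / R) - μhat ℓ‖ ≤ α * M * (B * Δ + 1) * Δ := by
    intro ℓ hℓ
    set u : ℝ := -(ℓ:ℝ) / R with hu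
    have huΔ : |u| ≤ Δ := by
      have hl : |(ℓ:ℝ)| ≤ (n:ℝ) := by
        rw [hT, Finset.mem_Ioo] at hℓ
        have h1 : |ℓ| ≤ (n:ℤ) := abs_le.mpr ⟨by omega, by omega⟩
        calc |(ℓ:ℝ)| = ((|ℓ|:ℤ):ℝ) := by push_cast; ring
          _ ≤ (n:ℝ) := by exact_mod_cast h1
      have hn' : (n:ℝ) ≤ R * Δ := by
        rw [hn]; exact Nat.floor_le (by positivity)
      rw [hu, abs_div, abs_neg, abs_of_pos hR, div_le_iff₀ hR]
      calc |(ℓ:ℝ)| ≤ (n:ℝ) := hl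
        _ ≤ R * Δ := hn'
        _ = Δ * R := by ring
    have htu : tstar - ℓ / R = tstar + u := by rw [hu]; ring
    rw [htu, hf, hμ, ← Finset.sum_sub_distrib]
    refine le_trans (norm_sum_le _ _) ?_
    have perj : ∀ j : Fin K,
        ‖A j (tstar + u) * Complex.exp (Complex.I * ((φ j (tstar + u) : ℝ) : ℂ)) -
          fc j tstar * Complex.exp (-Complex.I * ℓ * ((lam j : ℝ) : ℂ))‖
          ≤ α * (B * Δ + 1) * Δ * ‖A j tstar‖ := by
      intro j
      set c : ℝ := deriv (φ j) tstar with hcj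
      have hcB : |c| ≤ B := hB.1 j
      have hexp2 : fc j tstar * Complex.exp (-Complex.I * ℓ * ((lam j : ℝ) : ℂ)) =
          A j tstar * Complex.exp (Complex.I * ((φ j tstar + u * c : ℝ) : ℂ)) := by
        rw [hfc, hlam, mul_assoc, ← Complex.exp_add]
        congr 2
        rw [hu]
        push_cast
        have hR0 : (R:ℂ) ≠ 0 := by exact_mod_cast ne_of_gt hR
        field_simp
        ring
      rw [hexp2]
      have hsplit : A j (tstar + u) * Complex.exp (Complex.I * ((φ j (tstar + u) : ℝ) : ℂ)) -
          A j tstar * Complex.exp (Complex.I * ((φ j tstar + u * c : ℝ) : ℂ)) =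
          (A j (tstar + u) - A j tstar) * Complex.exp (Complex.I * ((φ j (tstar + u) : ℝ) : ℂ)) +
          A j tstar * (Complex.exp (Complex.I * ((φ j (tstar + u) : ℝ) : ℂ)) -
            Complex.exp (Complex.I * ((φ j tstar + u * c : ℝ) : ℂ))) := by ring
      rw [hsplit]
      refine le_trans (norm_add_le _ _) ?_
      have habs1 : ‖Complex.exp (Complex.I * ((φ j (tstar + u) : ℝ) : ℂ))‖ = 1 := by
        rw [Complex.norm_exp]
        simp
      rw [norm_mul, norm_mul, habs1, mul_one]
      have h1 : ‖A j (tstar + u) - A j tstar‖ ≤ α * |u| * ‖A j tstar‖ :=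
        hAslow j u huΔ
      have h2 : ‖Complex.exp (Complex.I * ((φ j (tstar + u) : ℝ) : ℂ)) -
          Complex.exp (Complex.I * ((φ j tstar + u * c : ℝ) : ℂ))‖ ≤ α * Δ * B * |u| := by
        refine le_trans (exp_I_lip _ _) ?_
        have := taylor_bound (hφ j) hΔ (hφslow j) hcB hα0 huΔ
        calc |φ j (tstar + u) - (φ j tstar + u * c)|
            = |φ j (tstar + u) - φ j tstar - u * c| := by ring_nf
          _ ≤ α * Δ * B * |u| := this
      have hAnn : (0:ℝ) ≤ ‖A j tstar‖ := norm_nonneg _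
      calc ‖A j (tstar + u) - A j tstar‖ +
            ‖A j tstar‖ * ‖Complex.exp (Complex.I * ((φ j (tstar + u) : ℝ) : ℂ)) -
              Complex.exp (Complex.I * ((φ j tstar + u * c : ℝ) : ℂ))‖
          ≤ α * |u| * ‖A j tstar‖ + ‖A j tstar‖ * (α * Δ * B * |u|) := by
            exact add_le_add h1 (mul_le_mul_of_nonneg_left h2 hAnn)
        _ ≤ α * Δ * ‖A j tstar‖ + ‖A j tstar‖ * (α * Δ * B * Δ) := by
            have e1 : α * |u| * ‖A j tstar‖ ≤ α * Δ * ‖A j tstar‖ := by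
              apply mul_le_mul_of_nonneg_right _ hAnn
              exact mul_le_mul_of_nonneg_left huΔ hα0
            have e2 : ‖A j tstar‖ * (α * Δ * B * |u|) ≤
                ‖A j tstar‖ * (α * Δ * B * Δ) := by
              apply mul_le_mul_of_nonneg_left _ hAnn
              apply mul_le_mul_of_nonneg_left huΔ
              positivity
            linarith
        _ = α * (B * Δ + 1) * Δ * ‖A j tstar‖ := by ring
    calc (∑ j, ‖A j (tstar + u) * Complex.exp (Complex.I * ((φ j (tstar + u) : ℝ) : ℂ)) -
          fc j tstar * Complex.exp (-Complex.I * ℓ * ((lam j : ℝ) : ℂ))‖)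
        ≤ ∑ j, α * (B * Δ + 1) * Δ * ‖A j tstar‖ :=
          Finset.sum_le_sum fun j _ => perj j
      _ = α * (B * Δ + 1) * Δ * M := by rw [hM, Finset.mul_sum]
      _ = α * M * (B * Δ + 1) * Δ := by ring
  -- assemble
  rw [← mul_sub, ← Finset.sum_sub_distrib]
  have hsum_eq : ∀ ℓ ∈ T,
      (H (|(ℓ:ℝ)|/n) : ℂ) * f (tstar - ℓ / R) * Complex.exp (Complex.I * ℓ * x) -
      (H (|(ℓ:ℝ)|/n) : ℂ) * μhat ℓ * Complex.exp (Complex.I * ℓ * x) =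
      (H (|(ℓ:ℝ)|/n) : ℂ) * (f (tstar - ℓ / R) - μhat ℓ) * Complex.exp (Complex.I * ℓ * x) := by
    intro ℓ _; ring
  rw [Finset.sum_congr rfl hsum_eq, norm_mul]
  have habsbar : ‖((hbar H n : ℝ) : ℂ)‖ = S⁻¹ := by
    rw [Complex.norm_real, Real.norm_eq_abs, hbar_eq, abs_of_pos (inv_pos.mpr hSpos)]
  rw [habsbar]
  have hsumbound : ‖∑ ℓ ∈ T,
      (H (|(ℓ:ℝ)|/n) : ℂ) * (f (tstar - ℓ / R) - μhat ℓ) * Complex.exp (Complex.I * ℓ * x)‖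
      ≤ S * (α * M * (B * Δ + 1) * Δ) := by
    refine le_trans (norm_sum_le _ _) ?_
    rw [hS, Finset.sum_mul]
    refine Finset.sum_le_sum fun ℓ hℓ => ?_
    rw [norm_mul, norm_mul]
    have habse : ‖Complex.exp (Complex.I * ℓ * x)‖ = 1 := by
      rw [Complex.norm_exp]
      have : (Complex.I * ℓ * x).re = 0 := by simp
      rw [this, Real.exp_zero]
    rw [habse, mul_one, Complex.norm_real, Real.norm_eq_abs, abs_of_nonneg ((hH01 _).1)]
    exact mul_le_mul_of_nonneg_left (key ℓ hℓ) ((hH01 _).1)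
  calc S⁻¹ * ‖∑ ℓ ∈ T,
        (H (|(ℓ:ℝ)|/n) : ℂ) * (f (tstar - ℓ / R) - μhat ℓ) * Complex.exp (Complex.I * ℓ * x)‖
      ≤ S⁻¹ * (S * (α * M * (B * Δ + 1) * Δ)) := by
        exact mul_le_mul_of_nonneg_left hsumbound (inv_nonneg.mpr (le_of_lt hSpos))
    _ = α * M * (B * Δ + 1) * Δ := by
        field_simp
end
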